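/- arXiv:math/0503137 — 7 statements merged into one kernel-verified Lean document; each statement's English description precedes it below -/
import Mathlib

section
/- Let T be an infinite, locally finite, spherically symmetric rooted tree: every vertex at distance n − 1 from the root o has exactly d_n ≥ 1 children, and the interaction strengths depend only on the level, so θ_v = θ_n = tanh(β J_n) for |v| = n, with 0 < J_min ≤ J_n ≤ J_max. Then lim_N P^(N,+)(η(o) = +1) > 1/2 (i.e., there are multiple Gibbs states for the ferromagnetic Ising model on T at inverse temperature β) if and only if Σ_{n ≥ 1} Π_{i=1}^n (d_i θ_i)^{-2} < ∞. -/
open scoped ENNReal Classical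

noncomputable section

/-- Vertices of the canonical rooted tree: finite sequences of naturals; the root is `[]`. -/
abbrev Vtx := List ℕ

/-- Vertices of the tree determined by the child-count function `c`. -/
inductive IsVtx (c : Vtx → ℕ) : Vtx → Prop
  | root : IsVtx c []
  | child {v : Vtx} {i : ℕ} : IsVtx c v → i < c v → IsVtx c (v ++ [i])

/-- A flow: conservation at every non-root, non-leaf vertex (edges are identified with their
lower endpoints). -/
def IsFlow (c : Vtx → ℕ) (μ : Vtx → ℝ≥0∞) : Prop :=
  ∀ v : Vtx, IsVtx c v → v ≠ [] → c v ≠ 0 →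
    μ v = ∑ i ∈ Finset.range (c v), μ (v ++ [i])

/-- Total flow out of the root. -/
def flowMass (c : Vtx → ℕ) (μ : Vtx → ℝ≥0∞) : ℝ≥0∞ :=
  ∑ i ∈ Finset.range (c []), μ [i]

/-- An infinite ray from the root. -/
def IsRay (c : Vtx → ℕ) (y : ℕ → ℕ) : Prop :=
  ∀ n : ℕ, y n < c ((List.range n).map y)

/-- `V_μ(y) = Σ_{e ∈ y} (μ(e) R(e))^s` along an infinite ray. -/
def rayPot (μ R : Vtx → ℝ≥0∞) (s : ℝ) (y : ℕ → ℕ) : ℝ≥0∞ :=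
  ∑' n : ℕ, (μ ((List.range (n + 1)).map y) * R ((List.range (n + 1)).map y)) ^ s

/-- `V_μ` along the maximal path from the root to a leaf `ℓ`. -/
def leafPot (μ R : Vtx → ℝ≥0∞) (s : ℝ) (ℓ : Vtx) : ℝ≥0∞ :=
  ∑ k ∈ Finset.range ℓ.length, (μ (ℓ.take (k + 1)) * R (ℓ.take (k + 1))) ^ s

/-- `cap_p` of an infinite leafless tree. -/
def capInf (c : Vtx → ℕ) (R : Vtx → ℝ≥0∞) (p : ℝ) : ℝ≥0∞ :=
  sSup {m | ∃ μ : Vtx → ℝ≥0∞, IsFlow c μ ∧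
    (∀ y : ℕ → ℕ, IsRay c y → rayPot μ R (p - 1) y ≤ 1) ∧ m = flowMass c μ}

/-- `cap_p` of a finite tree. -/
def capFin (c : Vtx → ℕ) (R : Vtx → ℝ≥0∞) (p : ℝ) : ℝ≥0∞ :=
  sSup {m | ∃ μ : Vtx → ℝ≥0∞, IsFlow c μ ∧
    (∀ ℓ : Vtx, IsVtx c ℓ → c ℓ = 0 → leafPot μ R (p - 1) ℓ ≤ 1) ∧ m = flowMass c μ}

/-- The set of vertices at distance `n` from the root. -/
def lev (c : Vtx → ℕ) : ℕ → Finset Vtx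
  | 0 => {([] : Vtx)}
  | n + 1 => (lev c n).biUnion fun v => (Finset.range (c v)).image fun i => v ++ [i]

/-- The vertices of the truncated tree `T^(N)`. -/
def verts (c : Vtx → ℕ) (N : ℕ) : Finset Vtx := (Finset.range (N + 1)).biUnion (lev c)

/-- Spin configurations on `T^(N)`. -/
def Conf (c : Vtx → ℕ) (N : ℕ) := {v // v ∈ verts c N} → Bool

instance (c : Vtx → ℕ) (N : ℕ) : Fintype (Conf c N) := by unfold Conf; infer_instance

/-- The ±1 spin of a configuration at a vertex. -/
def spin (c : Vtx → ℕ) (N : ℕ) (σ : Conf c N) (w : Vtx) : ℝ :=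
  if h : w ∈ verts c N then (if σ ⟨w, h⟩ then 1 else -1) else 1

/-- The weight `W(η) = Π_{v → w} exp(β J_w η(v) η(w))` of a configuration on `T^(N)`. -/
def wt (c : Vtx → ℕ) (J : Vtx → ℝ) (β : ℝ) (N : ℕ) (σ : Conf c N) : ℝ :=
  ∏ w ∈ (Finset.range N).biUnion (fun n => lev c (n + 1)),
    Real.exp (β * J w * spin c N σ w.dropLast * spin c N σ w)

/-- `P^(N,+)(η(o) = +1)`: probability of a plus spin at the root under plus boundary
conditions at level `N`. -/
def plusProb (c : Vtx → ℕ) (J : Vtx → ℝ) (β : ℝ) (N : ℕ) : ℝ :=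
  (∑ σ : Conf c N, if (∀ x : {v // v ∈ verts c N}, x.1 ∈ lev c N → σ x = true)
      ∧ spin c N σ [] = 1 then wt c J β N σ else 0) /
  (∑ σ : Conf c N, if (∀ x : {v // v ∈ verts c N}, x.1 ∈ lev c N → σ x = true)
      then wt c J β N σ else 0)

/-!
Cutting the depth-`N + 1` tree at the root, the plus-boundary partition function with prescribed
root spin is a product over the `d₁` subtrees. On a spherically symmetric tree this makes
`m_N = 2 P^(N,+)(η(o) = +1) - 1` satisfy `m_{N+1} = tanh (d₁ artanh (θ₁ m'_N))`, where `m'_N`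
belongs to the tree with its first level removed, and `m_0 = 1`. From `tanh⁻² = sinh⁻² + 1`,
`s ≤ sinh s ≤ s + s² sinh s / 6` and `y ≤ artanh y ≤ sinh (artanh y)` one gets
`(d y)⁻² + 5/12 ≤ (tanh (d artanh y))⁻² ≤ (d y)⁻² + 1` (the left one for `d ≥ 2`; for `d = 1` the
map is `y ↦ y`). With `P_k = ∏_{i ≤ k} (dᵢ θᵢ)⁻²` and `q = tanh² (β J_max) < 1` these unroll to
`5/12 ((1 - q) ∑_{k ≤ N} P_k + q) ≤ m_N⁻² ≤ ∑_{k ≤ N} P_k`, so the decreasing sequence `m_N` has a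
positive limit exactly when `∑ P_k < ∞`.
-/

namespace IsingTree

open Real Finset Filter Topology

lemma sinh_le_mul_cosh {x : ℝ} (hx : 0 ≤ x) : sinh x ≤ x * cosh x := by
  refine hasSum_le (fun n => ?_) (hasSum_sinh x) ((hasSum_cosh x).mul_left x)
  rw [← mul_div_assoc, ← pow_succ']
  gcongr
  omega

lemma sinh_sub_self_le {x : ℝ} (hx : 0 ≤ x) : sinh x - x ≤ x ^ 2 / 6 * sinh x := by
  have h := (hasSum_nat_add_iff' 1).mpr (hasSum_sinh x)
  simp only [range_one, sum_singleton, mul_zero, zero_add, pow_one, Nat.factorial_one,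
    Nat.cast_one, div_one] at h
  refine hasSum_le (fun n => ?_) h ((hasSum_sinh x).mul_left (x ^ 2 / 6))
  have hfact : ((2 * (n + 1) + 1).factorial : ℝ)
      = (2 * n + 3) * (2 * n + 2) * (2 * n + 1).factorial := by
    rw [show 2 * (n + 1) + 1 = (2 * n + 1) + 1 + 1 by ring, Nat.factorial_succ,
      Nat.factorial_succ]
    push_cast; ring
  rw [hfact, show 2 * (n + 1) + 1 = 2 * n + 1 + 2 by ring, pow_add]
  have : (0 : ℝ) < (2 * n + 1).factorial := by positivity
  rw [div_le_iff₀ (by positivity)]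
  field_simp
  have hp : 0 ≤ x ^ (2 * n + 1) * x ^ 2 := by positivity
  nlinarith [mul_nonneg hp (Nat.cast_nonneg n : (0 : ℝ) ≤ n)]

lemma tanh_pos_of_pos {x : ℝ} (hx : 0 < x) : 0 < tanh x := by
  rw [tanh_eq_sinh_div_cosh]
  exact div_pos (sinh_pos_iff.2 hx) (cosh_pos x)

lemma tanh_le_tanh {a b : ℝ} (h : a ≤ b) : tanh a ≤ tanh b := by
  rw [tanh_eq_sinh_div_cosh, tanh_eq_sinh_div_cosh, div_le_div_iff₀ (cosh_pos a) (cosh_pos b)]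
  have := sinh_nonneg_iff.2 (sub_nonneg.2 h)
  rw [sinh_sub] at this
  linarith

lemma tanh_le_self {x : ℝ} (hx : 0 ≤ x) : tanh x ≤ x := by
  rw [tanh_eq_sinh_div_cosh, div_le_iff₀ (cosh_pos x)]
  exact sinh_le_mul_cosh hx

lemma inv_tanh_sq {x : ℝ} (hx : x ≠ 0) : (tanh x ^ 2)⁻¹ = (sinh x ^ 2)⁻¹ + 1 := by
  have : sinh x ≠ 0 := by simpa using hx
  rw [tanh_eq_sinh_div_cosh, div_pow, inv_div, cosh_sq]
  field_simp
  ring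

lemma inv_sq_sub_third_le_inv_sinh_sq {s : ℝ} (hs : 0 < s) :
    (s ^ 2)⁻¹ - 1 / 3 ≤ (sinh s ^ 2)⁻¹ := by
  have h1 : s < sinh s := self_lt_sinh_iff.2 hs
  have h2 := sinh_sub_self_le hs.le
  rw [sub_le_iff_le_add, inv_le_iff_one_le_mul₀ (by positivity)]
  field_simp
  nlinarith [mul_pos hs (sub_pos.2 h1), sq_nonneg (sinh s), mul_pos (mul_pos hs hs) (sub_pos.2 h1)]

lemma self_le_artanh {y : ℝ} (h0 : 0 ≤ y) (h1 : y < 1) : y ≤ artanh y := by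
  simpa [tanh_artanh ⟨by linarith, h1⟩] using tanh_le_self (artanh_nonneg h0)

lemma inv_sq_sub_one_le_inv_artanh_sq {y : ℝ} (h0 : 0 < y) (h1 : y < 1) :
    (y ^ 2)⁻¹ - 1 ≤ (artanh y ^ 2)⁻¹ := by
  have hy : y ∈ Set.Ioo (-1) 1 := ⟨by linarith, h1⟩
  have ht : 0 < artanh y := artanh_pos ⟨h0, h1⟩
  have hs : artanh y ≤ sinh (artanh y) := self_le_sinh_iff.2 ht.le
  have hsq : sinh (artanh y) ^ 2 = y ^ 2 / (1 - y ^ 2) := by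
    rw [sinh_artanh hy, div_pow, sq_sqrt (by nlinarith)]
  calc (y ^ 2)⁻¹ - 1 = (sinh (artanh y) ^ 2)⁻¹ := by
        rw [hsq, inv_div]; field_simp
    _ ≤ (artanh y ^ 2)⁻¹ := by gcongr

lemma tanh_natCast_mul_artanh (d : ℕ) {y : ℝ} (hy : y ∈ Set.Ioo (-1) 1) :
    tanh (d * artanh y) = ((1 + y) ^ d - (1 - y) ^ d) / ((1 + y) ^ d + (1 - y) ^ d) := by
  have h1 : 0 < 1 + y := by linarith [hy.1]
  have h2 : 0 < 1 - y := by linarith [hy.2]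
  have hE : exp (artanh y) ^ 2 = (1 + y) / (1 - y) := by
    rw [exp_artanh hy, sq_sqrt (by positivity)]
  have hu : (exp (artanh y) ^ d) ^ 2 * (1 - y) ^ d = (1 + y) ^ d := by
    rw [← pow_mul, mul_comm d 2, pow_mul, hE, div_pow, div_mul_cancel₀ _ (by positivity)]
  have : 0 < exp (artanh y) ^ d := by positivity
  rw [tanh_eq, exp_neg, exp_nat_mul, div_eq_div_iff (by positivity) (by positivity)]
  field_simp
  linear_combination (2 : ℝ) * hu

lemma inv_sq_tanh_mul_artanh_le {d y : ℝ} (hd : 0 < d) (h0 : 0 < y) (h1 : y < 1) :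
    (tanh (d * artanh y) ^ 2)⁻¹ ≤ ((d * y) ^ 2)⁻¹ + 1 := by
  have ht : 0 < artanh y := artanh_pos ⟨h0, h1⟩
  have hy : d * y ≤ d * artanh y := mul_le_mul_of_nonneg_left (self_le_artanh h0.le h1) hd.le
  have hsinh : d * artanh y ≤ sinh (d * artanh y) := self_le_sinh_iff.2 (by positivity)
  rw [inv_tanh_sq (by positivity)]
  gcongr
  linarith

lemma le_inv_sq_tanh_mul_artanh {d y : ℝ} (hd : 2 ≤ d) (h0 : 0 < y) (h1 : y < 1) :
    ((d * y) ^ 2)⁻¹ + 5 / 12 ≤ (tanh (d * artanh y) ^ 2)⁻¹ := by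
  have ht : 0 < artanh y := artanh_pos ⟨h0, h1⟩
  have hsinh := inv_sq_sub_third_le_inv_sinh_sq (mul_pos (by linarith) ht : 0 < d * artanh y)
  have hartanh := inv_sq_sub_one_le_inv_artanh_sq h0 h1
  have hd2 : (d ^ 2)⁻¹ ≤ 1 / 4 := by
    rw [inv_le_comm₀ (by positivity) (by norm_num)]; nlinarith
  rw [inv_tanh_sq (by positivity)]
  calc ((d * y) ^ 2)⁻¹ + 5 / 12 ≤ (d ^ 2)⁻¹ * ((y ^ 2)⁻¹ - 1) + 2 / 3 := by
        rw [mul_pow, mul_inv]; linarith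
    _ ≤ (d ^ 2)⁻¹ * (artanh y ^ 2)⁻¹ + 2 / 3 := by gcongr
    _ = ((d * artanh y) ^ 2)⁻¹ - 1 / 3 + 1 := by rw [mul_pow, mul_inv]; ring
    _ ≤ (sinh (d * artanh y) ^ 2)⁻¹ + 1 := by linarith

lemma exists_tendsto_one_add_div_two_iff {ι : Type*} {l : Filter ι} {f : ι → ℝ} :
    (∃ L, Tendsto (fun n => (1 + f n) / 2) l (𝓝 L) ∧ 1 / 2 < L) ↔
      ∃ M, Tendsto f l (𝓝 M) ∧ 0 < M := by
  constructor
  · rintro ⟨L, hL, hL2⟩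
    refine ⟨2 * L - 1, ?_, by linarith⟩
    convert (hL.const_mul 2).sub_const 1 using 2
    ring
  · rintro ⟨M, hM, hM0⟩
    exact ⟨(1 + M) / 2, (hM.const_add 1).div_const 2, by linarith⟩

def rootMag : ℕ → (ℕ → ℕ) → (ℕ → ℝ) → ℝ
  | 0, _, _ => 1
  | N + 1, d, θ =>
    tanh (d 1 * artanh (θ 1 * rootMag N (fun n => d (n + 1)) (fun n => θ (n + 1))))

lemma abs_rootMag_le_one (N : ℕ) (d : ℕ → ℕ) (θ : ℕ → ℝ) : |rootMag N d θ| ≤ 1 := by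
  cases N with
  | zero => simp [rootMag]
  | succ N => exact (abs_tanh_lt_one _).le

def invGrowth (d : ℕ → ℕ) (θ : ℕ → ℝ) (k : ℕ) : ℝ :=
  ∏ j ∈ range k, ((d (j + 1) * θ (j + 1)) ^ 2)⁻¹

lemma invGrowth_eq_prod_Icc (d : ℕ → ℕ) (θ : ℕ → ℝ) (k : ℕ) :
    invGrowth d θ k = ∏ i ∈ Icc 1 k, ((d i * θ i) ^ 2)⁻¹ := by
  rw [invGrowth, range_eq_Ico, prod_Ico_add' (fun i => ((d i * θ i : ℝ) ^ 2)⁻¹),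
    zero_add, ← Finset.Ico_add_one_right_eq_Icc]

lemma sum_range_succ_invGrowth_eq_shift (d : ℕ → ℕ) (θ : ℕ → ℝ) (N : ℕ) :
    ∑ k ∈ range (N + 1), invGrowth d θ k =
      1 + ((d 1 * θ 1) ^ 2)⁻¹ * ∑ k ∈ range N,
        invGrowth (fun n => d (n + 1)) (fun n => θ (n + 1)) k := by
  rw [sum_range_succ', mul_sum, add_comm]
  simp only [invGrowth, prod_range_succ', prod_range_zero, zero_add]
  congr 1
  exact sum_congr rfl fun k _ => mul_comm _ _

lemma sum_range_succ_invGrowth_eq_one_add (d : ℕ → ℕ) (θ : ℕ → ℝ) (N : ℕ) :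
    ∑ k ∈ range (N + 1), invGrowth d θ k = 1 + ∑ n ∈ range N, invGrowth d θ (n + 1) := by
  rw [sum_range_succ', add_comm]
  simp [invGrowth]

lemma invGrowth_nonneg (d : ℕ → ℕ) (θ : ℕ → ℝ) (k : ℕ) : 0 ≤ invGrowth d θ k :=
  prod_nonneg fun _ _ => by positivity

section Magnetization

variable {d : ℕ → ℕ} {θ : ℕ → ℝ}

def Admissible (d : ℕ → ℕ) (θ : ℕ → ℝ) : Prop :=
  ∀ n, 1 ≤ d (n + 1) ∧ 0 < θ (n + 1) ∧ θ (n + 1) < 1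

lemma Admissible.shift (h : Admissible d θ) :
    Admissible (fun n => d (n + 1)) (fun n => θ (n + 1)) :=
  fun n => h (n + 1)

lemma rootMag_mem (h : Admissible d θ) (N : ℕ) : rootMag N d θ ∈ Set.Ioc 0 1 := by
  induction N generalizing d θ with
  | zero => simp [rootMag]
  | succ N ih =>
    obtain ⟨hd, hθ0, hθ1⟩ : 1 ≤ d 1 ∧ 0 < θ 1 ∧ θ 1 < 1 := h 0
    obtain ⟨hm0, hm1⟩ := ih h.shift
    have hd1 : (0 : ℝ) < d 1 := by exact_mod_cast hd
    exact ⟨tanh_pos_of_pos (mul_pos hd1 (artanh_pos ⟨mul_pos hθ0 hm0, by nlinarith⟩)),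
      (tanh_lt_one _).le⟩

lemma rootMag_succ_le (h : Admissible d θ) (N : ℕ) : rootMag (N + 1) d θ ≤ rootMag N d θ := by
  induction N generalizing d θ with
  | zero => exact (tanh_lt_one _).le
  | succ N ih =>
    obtain ⟨-, hθ0, hθ1⟩ : 1 ≤ d 1 ∧ 0 < θ 1 ∧ θ 1 < 1 := h 0
    obtain ⟨hm0, -⟩ := rootMag_mem h.shift (N + 1)
    obtain ⟨-, hm1⟩ := rootMag_mem h.shift N
    refine tanh_le_tanh (mul_le_mul_of_nonneg_left (artanh_le_artanh ?_ ?_ ?_) (by positivity))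
    · nlinarith
    · nlinarith
    · exact mul_le_mul_of_nonneg_left (ih h.shift) hθ0.le

lemma inv_sq_rootMag_le (h : Admissible d θ) (N : ℕ) :
    (rootMag N d θ ^ 2)⁻¹ ≤ ∑ k ∈ range (N + 1), invGrowth d θ k := by
  induction N generalizing d θ with
  | zero => simp [rootMag, invGrowth]
  | succ N ih =>
    obtain ⟨hd, hθ0, hθ1⟩ : 1 ≤ d 1 ∧ 0 < θ 1 ∧ θ 1 < 1 := h 0
    obtain ⟨hm0, hm1⟩ := rootMag_mem h.shift N
    have hd1 : (0 : ℝ) < d 1 := by exact_mod_cast hd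
    have hstep := inv_sq_tanh_mul_artanh_le hd1 (mul_pos hθ0 hm0) (by nlinarith)
    have hih := mul_le_mul_of_nonneg_left (ih h.shift) (by positivity : 0 ≤ ((d 1 * θ 1 : ℝ) ^ 2)⁻¹)
    set m := rootMag N (fun n => d (n + 1)) (fun n => θ (n + 1))
    rw [sum_range_succ_invGrowth_eq_shift]
    calc (rootMag (N + 1) d θ ^ 2)⁻¹ ≤ ((d 1 * (θ 1 * m)) ^ 2)⁻¹ + 1 := hstep
      _ = ((d 1 * θ 1 : ℝ) ^ 2)⁻¹ * (m ^ 2)⁻¹ + 1 := by rw [← mul_assoc, mul_pow _ m, mul_inv]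
      _ ≤ _ := by linarith

/- At a level with `d = 1` the step gains no additive constant, but there `invGrowth` grows by the
factor `θ⁻² ≥ q⁻¹`, which the extra `q` in the bound pays for. -/
lemma le_inv_sq_rootMag (h : Admissible d θ) {q : ℝ} (hq : ∀ n, θ (n + 1) ^ 2 ≤ q) (N : ℕ) :
    5 / 12 * ((1 - q) * ∑ k ∈ range (N + 1), invGrowth d θ k + q) ≤ (rootMag N d θ ^ 2)⁻¹ := by
  induction N generalizing d θ with
  | zero => simp [rootMag, invGrowth]; linarith
  | succ N ih =>
    obtain ⟨hd, hθ0, hθ1⟩ : 1 ≤ d 1 ∧ 0 < θ 1 ∧ θ 1 < 1 := h 0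
    obtain ⟨hm0, hm1⟩ := rootMag_mem h.shift N
    have hq0 : 0 ≤ q := (sq_nonneg _).trans (hq 0)
    have hih := mul_le_mul_of_nonneg_left (ih h.shift (fun n => hq (n + 1)))
      (by positivity : 0 ≤ ((d 1 * θ 1 : ℝ) ^ 2)⁻¹)
    set m := rootMag N (fun n => d (n + 1)) (fun n => θ (n + 1))
    have hu : rootMag (N + 1) d θ = tanh (d 1 * artanh (θ 1 * m)) := rfl
    have ha : ((d 1 * (θ 1 * m) : ℝ) ^ 2)⁻¹ = ((d 1 * θ 1 : ℝ) ^ 2)⁻¹ * (m ^ 2)⁻¹ := by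
      rw [← mul_assoc, mul_pow _ m, mul_inv]
    rw [sum_range_succ_invGrowth_eq_shift, hu]
    rcases Nat.lt_or_ge (d 1) 2 with hd1 | hd2
    · have hd1 : (d 1 : ℝ) = 1 := by exact_mod_cast (by omega : d 1 = 1)
      have haq : 1 ≤ ((d 1 * θ 1 : ℝ) ^ 2)⁻¹ * q := by
        rw [hd1, one_mul, inv_mul_eq_div, one_le_div (by positivity)]
        exact hq 0
      have hstep : (tanh (d 1 * artanh (θ 1 * m)) ^ 2)⁻¹ = ((d 1 * (θ 1 * m) : ℝ) ^ 2)⁻¹ := by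
        rw [hd1, one_mul, one_mul, tanh_artanh ⟨by nlinarith, by nlinarith⟩]
      rw [hstep, ha]
      linarith
    · have hstep := le_inv_sq_tanh_mul_artanh (d := d 1) (by exact_mod_cast hd2)
        (mul_pos hθ0 hm0) (by nlinarith)
      rw [ha] at hstep
      have haq : 0 ≤ ((d 1 * θ 1 : ℝ) ^ 2)⁻¹ * q := by positivity
      linarith

lemma tendsto_rootMag_zero (h : Admissible d θ) {q : ℝ} (hq : ∀ n, θ (n + 1) ^ 2 ≤ q)
    (hq1 : q < 1) (hns : ¬Summable fun n => invGrowth d θ (n + 1)) :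
    Tendsto (rootMag · d θ) atTop (𝓝 0) := by
  have hsum : Tendsto (fun N => ∑ n ∈ range N, invGrowth d θ (n + 1)) atTop atTop :=
    (not_summable_iff_tendsto_nat_atTop_of_nonneg fun n => invGrowth_nonneg d θ _).1 hns
  have hbound : Tendsto
      (fun N => 5 / 12 * ((1 - q) * (1 + ∑ n ∈ range N, invGrowth d θ (n + 1)) + q))
      atTop atTop := by
    refine Tendsto.const_mul_atTop (by norm_num) (tendsto_atTop_add_const_right _ q ?_)
    exact (tendsto_atTop_add_const_left _ 1 hsum).const_mul_atTop (by linarith)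
  have hinv : Tendsto (fun N => (rootMag N d θ ^ 2)⁻¹) atTop atTop :=
    tendsto_atTop_mono (fun N => by
      simpa [sum_range_succ_invGrowth_eq_one_add] using le_inv_sq_rootMag h hq N) hbound
  have hsq : Tendsto (fun N => rootMag N d θ ^ 2) atTop (𝓝 0) := by
    simpa [Pi.inv_def] using hinv.inv_tendsto_atTop
  simpa [sqrt_sq (rootMag_mem h _).1.le] using hsq.sqrt

lemma inv_one_add_tsum_le_rootMag (h : Admissible d θ)
    (hs : Summable fun n => invGrowth d θ (n + 1)) (N : ℕ) :
    (1 + ∑' n, invGrowth d θ (n + 1))⁻¹ ≤ rootMag N d θ := by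
  obtain ⟨hm0, hm1⟩ := rootMag_mem h N
  have hT : ∑ n ∈ range N, invGrowth d θ (n + 1) ≤ ∑' n, invGrowth d θ (n + 1) :=
    hs.sum_le_tsum _ fun n _ => invGrowth_nonneg d θ _
  have hsq : (rootMag N d θ ^ 2)⁻¹ ≤ 1 + ∑' n, invGrowth d θ (n + 1) := by
    have := inv_sq_rootMag_le h N
    rw [sum_range_succ_invGrowth_eq_one_add] at this
    linarith
  calc (1 + ∑' n, invGrowth d θ (n + 1))⁻¹ ≤ rootMag N d θ ^ 2 :=
        inv_le_of_inv_le₀ (by positivity) hsq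
    _ ≤ rootMag N d θ := by nlinarith

lemma exists_tendsto_rootMag_pos_iff (h : Admissible d θ) {q : ℝ} (hq : ∀ n, θ (n + 1) ^ 2 ≤ q)
    (hq1 : q < 1) :
    (∃ M, Tendsto (rootMag · d θ) atTop (𝓝 M) ∧ 0 < M) ↔
      Summable fun n => invGrowth d θ (n + 1) := by
  constructor
  · rintro ⟨M, hM, hM0⟩
    by_contra hns
    exact hM0.ne' (tendsto_nhds_unique hM (tendsto_rootMag_zero h hq hq1 hns))
  · intro hs
    have hanti : Antitone (rootMag · d θ) := antitone_nat_of_succ_le (rootMag_succ_le h)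
    have hlow := inv_one_add_tsum_le_rootMag h hs
    refine ⟨⨅ N, rootMag N d θ, tendsto_atTop_ciInf hanti ⟨_, Set.forall_mem_range.2 hlow⟩, ?_⟩
    have hT : 0 ≤ ∑' n, invGrowth d θ (n + 1) := tsum_nonneg fun n => invGrowth_nonneg d θ _
    exact (by positivity : (0 : ℝ) < (1 + ∑' n, invGrowth d θ (n + 1))⁻¹).trans_le (le_ciInf hlow)

end Magnetization

section Tree

def subtree (c : Vtx → ℕ) (i : ℕ) : Vtx → ℕ := fun v => c (i :: v)

lemma length_eq_of_mem_lev {c : Vtx → ℕ} {n : ℕ} {w : Vtx} (h : w ∈ lev c n) :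
    w.length = n := by
  induction n generalizing w with
  | zero => simp_all [lev]
  | succ n ih =>
    simp only [lev, mem_biUnion, mem_image, mem_range] at h
    obtain ⟨v, hv, i, -, rfl⟩ := h
    simp [ih hv]

lemma lev_succ_eq_biUnion_subtree (c : Vtx → ℕ) (n : ℕ) :
    lev c (n + 1) = (range (c [])).biUnion fun i => (lev (subtree c i) n).image (i :: ·) := by
  induction n with
  | zero => ext w; simp [lev, eq_comm]
  | succ n ih =>
    ext w
    rw [lev, ih]
    simp only [lev, mem_biUnion, mem_image, mem_range]
    constructor
    · rintro ⟨v, ⟨i, hi, v', hv', rfl⟩, j, hj, rfl⟩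
      exact ⟨i, hi, v' ++ [j], ⟨v', hv', j, hj, rfl⟩, rfl⟩
    · rintro ⟨i, hi, u, ⟨v', hv', j, hj, rfl⟩, rfl⟩
      exact ⟨i :: v', ⟨i, hi, v', hv', rfl⟩, j, hj, rfl⟩

lemma nil_mem_verts (c : Vtx → ℕ) (N : ℕ) : [] ∈ verts c N :=
  mem_biUnion.2 ⟨0, by simp, by simp [lev]⟩

lemma lev_subset_verts (c : Vtx → ℕ) (N : ℕ) : lev c N ⊆ verts c N :=
  fun _ hw => mem_biUnion.2 ⟨N, by simp, hw⟩

def edges (c : Vtx → ℕ) (N : ℕ) : Finset Vtx := (range N).biUnion fun n => lev c (n + 1)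

lemma nil_notMem_edges (c : Vtx → ℕ) (N : ℕ) : [] ∉ edges c N := by
  simp only [edges, mem_biUnion]
  rintro ⟨n, -, h⟩
  simpa using length_eq_of_mem_lev h

lemma verts_eq_insert_edges (c : Vtx → ℕ) (N : ℕ) : verts c N = insert [] (edges c N) := by
  ext w
  simp only [verts, edges, mem_insert, mem_biUnion, mem_range]
  constructor
  · rintro ⟨_ | n, hn, h⟩
    · exact .inl (by simpa [lev] using h)
    · exact .inr ⟨n, by omega, h⟩
  · rintro (rfl | ⟨n, hn, h⟩)
    · exact ⟨0, by omega, by simp [lev]⟩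
    · exact ⟨n + 1, by omega, h⟩

lemma edges_succ (c : Vtx → ℕ) (N : ℕ) :
    edges c (N + 1) = (range (c [])).biUnion fun i => (verts (subtree c i) N).image (i :: ·) := by
  ext w
  simp only [edges, verts, lev_succ_eq_biUnion_subtree, mem_biUnion, mem_range, mem_image]
  constructor
  · rintro ⟨n, hn, i, hi, u, hu, rfl⟩
    exact ⟨i, hi, u, ⟨n, hn, hu⟩, rfl⟩
  · rintro ⟨i, hi, u, ⟨n, hn, hu⟩, rfl⟩
    exact ⟨n, hn, i, hi, u, hu, rfl⟩

lemma cons_mem_verts_succ {c : Vtx → ℕ} {N i : ℕ} {w : Vtx} :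
    i :: w ∈ verts c (N + 1) ↔ i < c [] ∧ w ∈ verts (subtree c i) N := by
  simp [verts_eq_insert_edges c, edges_succ]

lemma cons_mem_lev_succ {c : Vtx → ℕ} {N i : ℕ} {w : Vtx} :
    i :: w ∈ lev c (N + 1) ↔ i < c [] ∧ w ∈ lev (subtree c i) N := by
  simp [lev_succ_eq_biUnion_subtree]

end Tree

section Configurations

def spinSign (b : Bool) : ℝ := if b then 1 else -1

lemma spin_eq_spinSign {c : Vtx → ℕ} {N : ℕ} (σ : Conf c N) {w : Vtx} (h : w ∈ verts c N) :
    spin c N σ w = spinSign (σ ⟨w, h⟩) := by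
  rw [spin, dif_pos h, spinSign]

variable (c : Vtx → ℕ) (J : Vtx → ℝ) (β : ℝ) (N : ℕ) (b : Bool)
  (g : ∀ i : Fin (c []), Conf (subtree c i) N)

def glue : Conf c (N + 1) := fun x =>
  match x.1 with
  | [] => b
  | i :: w => if h : i < c [] ∧ w ∈ verts (subtree c i) N then g ⟨i, h.1⟩ ⟨w, h.2⟩
      else true -- unreachable, as `x.1 ∈ verts c (N + 1)`

lemma glue_cons {i : ℕ} {w : Vtx} (hmem : i :: w ∈ verts c (N + 1)) :
    glue c N b g ⟨i :: w, hmem⟩ =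
      g ⟨i, (cons_mem_verts_succ.1 hmem).1⟩ ⟨w, (cons_mem_verts_succ.1 hmem).2⟩ :=
  dif_pos (cons_mem_verts_succ.1 hmem)

def confEquiv :
    Bool × (∀ i : Fin (c []), Conf (subtree c i) N) ≃ Conf c (N + 1) where
  toFun p := glue c N p.1 p.2
  invFun σ := (σ ⟨[], nil_mem_verts c _⟩,
    fun i x => σ ⟨i :: x.1, cons_mem_verts_succ.2 ⟨i.2, x.2⟩⟩)
  left_inv p := by
    obtain ⟨b, g⟩ := p
    exact Prod.ext rfl (funext fun i => funext fun x =>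
      glue_cons c N b g (cons_mem_verts_succ.2 ⟨i.2, x.2⟩))
  right_inv σ := by
    funext ⟨v, hv⟩
    match v with
    | [] => rfl
    | i :: w => exact glue_cons c N _ _ hv

lemma spin_glue_nil : spin c (N + 1) (glue c N b g) [] = spinSign b := by
  rw [spin_eq_spinSign _ (nil_mem_verts c _)]; rfl

lemma spin_glue_cons (i : Fin (c [])) (w : Vtx) :
    spin c (N + 1) (glue c N b g) (i :: w) = spin (subtree c i) N (g i) w := by
  by_cases hw : w ∈ verts (subtree c i) N
  · have hmem := cons_mem_verts_succ.2 ⟨i.2, hw⟩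
    rw [spin_eq_spinSign _ hmem, spin_eq_spinSign _ hw, glue_cons c N b g hmem]
  · have hmem : i.1 :: w ∉ verts c (N + 1) := fun h => hw (cons_mem_verts_succ.1 h).2
    rw [spin, dif_neg hmem, spin, dif_neg hw]

lemma wt_glue :
    wt c J β (N + 1) (glue c N b g) =
      ∏ i : Fin (c []), (exp (β * J [i] * spinSign b * spin (subtree c i) N (g i) []) *
        wt (subtree c i) (fun v => J (i :: v)) β N (g i)) := by
  have hdisj : (range (c []) : Set ℕ).PairwiseDisjoint
      fun i => (verts (subtree c i) N).image (i :: ·) := by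
    intro i _ j _ hij
    simp only [Function.onFun, disjoint_left, mem_image]
    rintro _ ⟨u, -, rfl⟩ ⟨u', -, he⟩
    exact hij (List.cons.inj he).1.symm
  rw [wt, ← edges, edges_succ, prod_biUnion hdisj, ← Fin.prod_univ_eq_prod_range]
  refine prod_congr rfl fun i _ => ?_
  rw [prod_image fun _ _ _ _ h => (List.cons.inj h).2, verts_eq_insert_edges,
    prod_insert (nil_notMem_edges _ _), wt, ← edges]
  congr 1
  · rw [List.dropLast_singleton, spin_glue_nil, spin_glue_cons]
  · refine prod_congr rfl fun u hu => ?_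
    obtain ⟨a, l, rfl⟩ :=
      List.exists_cons_of_ne_nil (ne_of_mem_of_not_mem hu (nil_notMem_edges _ _))
    rw [List.dropLast_cons_cons, spin_glue_cons, spin_glue_cons]

def PlusBC (σ : Conf c N) : Prop :=
  ∀ x : {v // v ∈ verts c N}, x.1 ∈ lev c N → σ x = true

lemma plusBC_glue :
    PlusBC c (N + 1) (glue c N b g) ↔ ∀ i : Fin (c []), PlusBC (subtree c i) N (g i) := by
  constructor
  · intro h i x hx
    have hmem := lev_subset_verts c _ (cons_mem_lev_succ.2 ⟨i.2, hx⟩)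
    simpa [glue_cons c N b g hmem] using h ⟨_, hmem⟩ (cons_mem_lev_succ.2 ⟨i.2, hx⟩)
  · rintro h ⟨v, hv⟩ hlev
    rw [lev_succ_eq_biUnion_subtree] at hlev
    simp only [mem_biUnion, mem_image, mem_range] at hlev
    obtain ⟨i, hi, u, hu, rfl⟩ := hlev
    rw [glue_cons c N b g hv]
    exact h ⟨i, hi⟩ _ hu

def boundaryWt (σ : Conf c N) : ℝ :=
  if PlusBC c N σ then wt c J β N σ else 0

lemma boundaryWt_glue :
    boundaryWt c J β (N + 1) (glue c N b g) =
      ∏ i : Fin (c []), (exp (β * J [i] * spinSign b * spin (subtree c i) N (g i) []) *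
        boundaryWt (subtree c i) (fun v => J (i :: v)) β N (g i)) := by
  simp only [boundaryWt, mul_ite, mul_zero, Fintype.prod_ite_zero, plusBC_glue, wt_glue]
  split_ifs <;> rfl

def partFn (s : Bool) : ℝ :=
  ∑ σ : Conf c N, if σ ⟨[], nil_mem_verts c N⟩ = s then boundaryWt c J β N σ else 0

lemma plusProb_eq_partFn :
    plusProb c J β N = partFn c J β N true / (partFn c J β N true + partFn c J β N false) := by
  -- the boundary condition is spelled out so that its `Decidable` instance is the one in `plusProb`
  have hnum : ∀ σ : Conf c N, (if (∀ x : {v // v ∈ verts c N}, x.1 ∈ lev c N → σ x = true) ∧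
      spin c N σ [] = 1 then wt c J β N σ else 0) =
      if σ ⟨[], nil_mem_verts c N⟩ = true then boundaryWt c J β N σ else 0 := fun σ => by
    rw [spin_eq_spinSign σ (nil_mem_verts c N)]
    cases σ ⟨[], nil_mem_verts c N⟩ <;> norm_num [boundaryWt, spinSign, PlusBC]
  have hden : ∀ σ : Conf c N, (if (∀ x : {v // v ∈ verts c N}, x.1 ∈ lev c N → σ x = true) then
      wt c J β N σ else 0) =
      (if σ ⟨[], nil_mem_verts c N⟩ = true then boundaryWt c J β N σ else 0) +
        if σ ⟨[], nil_mem_verts c N⟩ = false then boundaryWt c J β N σ else 0 := fun σ => by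
    cases σ ⟨[], nil_mem_verts c N⟩ <;> simp [boundaryWt, PlusBC]
  rw [plusProb, partFn, partFn, ← sum_add_distrib]
  exact congr_arg₂ (· / ·) (sum_congr rfl fun σ _ => hnum σ) (sum_congr rfl fun σ _ => hden σ)

lemma partFn_zero (s : Bool) :
    partFn c J β 0 s = if s then 1 else 0 := by
  have hverts : ∀ x : {v // v ∈ verts c 0}, x = ⟨[], nil_mem_verts c 0⟩ := fun ⟨v, hv⟩ => by
    simp only [verts, zero_add, range_one, singleton_biUnion, lev, mem_singleton] at hv
    subst hv; rfl
  let e : Bool ≃ Conf c 0 :=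
    { toFun := fun b _ => b
      invFun := fun σ => σ ⟨[], nil_mem_verts c 0⟩
      left_inv := fun _ => rfl
      right_inv := fun σ => funext fun x => by rw [hverts x] }
  have hwt : ∀ b : Bool, boundaryWt c J β 0 (e b) = if b then 1 else 0 := fun b => by
    have hbc : PlusBC c 0 (e b) ↔ b = true :=
      ⟨fun h => h ⟨[], nil_mem_verts c 0⟩ (by simp [lev]), fun h x _ => h⟩
    simp only [boundaryWt, hbc, wt, range_zero, biUnion_empty, prod_empty]
  rw [partFn, ← e.sum_comp, Fintype.sum_bool]
  change ite (true = s) _ _ + ite (false = s) _ _ = _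
  cases s <;> simp [hwt]

lemma sum_spin_mul_boundaryWt (K : ℝ) :
    ∑ σ : Conf c N, exp (K * spin c N σ []) * boundaryWt c J β N σ =
      ∑ s : Bool, exp (K * spinSign s) * partFn c J β N s := by
  simp only [Fintype.sum_bool, partFn, mul_sum, ← sum_add_distrib]
  refine sum_congr rfl fun σ _ => ?_
  rw [spin_eq_spinSign σ (nil_mem_verts c N)]
  cases σ ⟨[], nil_mem_verts c N⟩ <;> simp

lemma partFn_succ (s : Bool) :
    partFn c J β (N + 1) s = ∏ i : Fin (c []), ∑ s' : Bool,
      exp (β * J [i] * spinSign s * spinSign s') *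
        partFn (subtree c i) (fun v => J (i :: v)) β N s' := by
  rw [partFn, ← (confEquiv c N).sum_comp, Fintype.sum_prod_type, Fintype.sum_bool]
  change ∑ g, ite (true = s) (boundaryWt c J β (N + 1) (glue c N true g)) 0 +
    ∑ g, ite (false = s) (boundaryWt c J β (N + 1) (glue c N false g)) 0 = _
  have hsum : ∀ b, ∑ g, boundaryWt c J β (N + 1) (glue c N b g) =
      ∏ i : Fin (c []), ∑ x : Conf (subtree c i) N,
        exp (β * J [i] * spinSign b * spin (subtree c i) N x []) *
          boundaryWt (subtree c i) (fun v => J (i :: v)) β N x := fun b => by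
    simp only [boundaryWt_glue]
    exact (Fintype.prod_sum fun (i : Fin (c [])) (x : Conf (subtree c i) N) =>
      exp (β * J [i] * spinSign b * spin (subtree c i) N x []) *
        boundaryWt (subtree c i) (fun v => J (i :: v)) β N x).symm
  simp only [sum_spin_mul_boundaryWt] at hsum
  cases s <;> simp [hsum]

end Configurations

section SphericallySymmetric

lemma _root_.IsVtx.cons {c : Vtx → ℕ} {i : ℕ} (hi : i < c []) {v : Vtx}
    (h : IsVtx (subtree c i) v) : IsVtx c (i :: v) := by
  induction h with
  | root => exact IsVtx.child IsVtx.root hi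
  | child _ hj ih => exact IsVtx.child ih hj

lemma sum_exp_mul_spinSign (K m : ℝ) (Z : Bool → ℝ)
    (hZ : Z true - Z false = m * (Z true + Z false)) (s : Bool) :
    ∑ s' : Bool, exp (K * spinSign s * spinSign s') * Z s' =
      cosh K * (Z true + Z false) * (1 + spinSign s * (tanh K * m)) := by
  have hsinh : cosh K * tanh K = sinh K := by
    rw [tanh_eq_sinh_div_cosh, mul_div_cancel₀ _ (cosh_pos K).ne']
  have hexp : exp K = cosh K + sinh K := (cosh_add_sinh K).symm
  have hexp_neg : exp (-K) = cosh K - sinh K := (cosh_sub_sinh K).symm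
  rw [Fintype.sum_bool]
  cases s
  · simp only [spinSign, Bool.false_eq_true, if_false, if_true, mul_neg, mul_one, neg_neg]
    rw [hexp, hexp_neg]
    linear_combination (-sinh K) * hZ + m * (Z true + Z false) * hsinh
  · simp only [spinSign, Bool.false_eq_true, if_false, if_true, mul_neg, mul_one]
    rw [hexp, hexp_neg]
    linear_combination sinh K * hZ - m * (Z true + Z false) * hsinh

def HasMagnetization (Z : Bool → ℝ) (m : ℝ) : Prop :=
  0 < Z true ∧ 0 ≤ Z false ∧ Z true - Z false = m * (Z true + Z false)

lemma partFn_succ_eq_mul_pow (c : Vtx → ℕ) (J : Vtx → ℝ) (β : ℝ) (N : ℕ) {j m : ℝ}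
    (hJ : ∀ i : Fin (c []), J [i] = j)
    (hZ : ∀ i : Fin (c []), HasMagnetization (partFn (subtree c i) (fun v => J (i :: v)) β N) m) :
    ∃ C > 0, ∀ s, partFn c J β (N + 1) s = C * (1 + spinSign s * (tanh (β * j) * m)) ^ c [] := by
  refine ⟨∏ i : Fin (c []), cosh (β * j) *
      (partFn (subtree c i) (fun v => J (i :: v)) β N true +
        partFn (subtree c i) (fun v => J (i :: v)) β N false),
    prod_pos fun i _ => mul_pos (cosh_pos _) (add_pos_of_pos_of_nonneg (hZ i).1 (hZ i).2.1),
    fun s => ?_⟩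
  rw [partFn_succ, ← Fin.prod_const, ← prod_mul_distrib]
  refine prod_congr rfl fun i _ => ?_
  rw [hJ i]
  exact sum_exp_mul_spinSign _ _ _ (hZ i).2.2 s

theorem hasMagnetization_partFn (β : ℝ) (N : ℕ) (c : Vtx → ℕ) (J : Vtx → ℝ) (d : ℕ → ℕ)
    (K : ℕ → ℝ) (hc : ∀ v, IsVtx c v → c v = d (v.length + 1))
    (hJ : ∀ v, IsVtx c v → v ≠ [] → J v = K v.length) :
    HasMagnetization (partFn c J β N) (rootMag N d (fun n => tanh (β * K n))) := by
  induction N generalizing c J d K with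
  | zero => simp [HasMagnetization, partFn_zero, rootMag]
  | succ N ih =>
    obtain ⟨C, hC, hZ⟩ := partFn_succ_eq_mul_pow c J β N (j := K 1)
      (fun i => hJ [i] (IsVtx.root.cons i.2) (List.cons_ne_nil _ _))
      (fun i => ih (subtree c i) (fun v => J (i :: v)) (fun n => d (n + 1)) (fun n => K (n + 1))
        (fun v hv => by simpa [subtree] using hc _ (hv.cons i.2))
        (fun v hv _ => by simpa using hJ _ (hv.cons i.2) (List.cons_ne_nil _ _)))
    set y := tanh (β * K 1) * rootMag N (fun n => d (n + 1)) (fun n => tanh (β * K (n + 1)))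
    have hy : y ∈ Set.Ioo (-1) 1 := abs_lt.1 <| by
      rw [abs_mul]
      exact mul_lt_one_of_nonneg_of_lt_one_left (abs_nonneg _) (abs_tanh_lt_one _)
        (abs_rootMag_le_one _ _ _)
    have hy1 : 0 < 1 + y := by linarith [hy.1]
    have hy2 : 0 < 1 - y := by linarith [hy.2]
    have hmag : rootMag (N + 1) d (fun n => tanh (β * K n)) = tanh (d 1 * artanh y) := rfl
    rw [HasMagnetization, hZ, hZ, hmag, tanh_natCast_mul_artanh _ hy, hc [] IsVtx.root,
      List.length_nil, zero_add]
    simp only [spinSign, if_true, Bool.false_eq_true, if_false, one_mul, neg_one_mul,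
      ← sub_eq_add_neg]
    refine ⟨by positivity, by positivity, ?_⟩
    field_simp

theorem plusProb_eq_rootMag (β : ℝ) (c : Vtx → ℕ) (J : Vtx → ℝ) (d : ℕ → ℕ) (K : ℕ → ℝ)
    (hc : ∀ v, IsVtx c v → c v = d (v.length + 1))
    (hJ : ∀ v, IsVtx c v → v ≠ [] → J v = K v.length) (N : ℕ) :
    plusProb c J β N = (1 + rootMag N d (fun n => tanh (β * K n))) / 2 := by
  obtain ⟨hpos, hnonneg, hZ⟩ := hasMagnetization_partFn β N c J d K hc hJ
  rw [plusProb_eq_partFn, div_eq_div_iff (by positivity) two_ne_zero]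
  linarith

end SphericallySymmetric

end IsingTree

open IsingTree Real in
theorem stmt3 (c : Vtx → ℕ) (d : ℕ → ℕ) (hd : ∀ n, 1 ≤ d n)
    (hc : ∀ v, IsVtx c v → c v = d (v.length + 1))
    (J : Vtx → ℝ) (Jl : ℕ → ℝ)
    (hJl : ∀ v, IsVtx c v → v ≠ [] → J v = Jl v.length)
    (β Jmin Jmax : ℝ) (hβ : 0 < β) (hJmin : 0 < Jmin)
    (hJb : ∀ n : ℕ, 1 ≤ n → Jmin ≤ Jl n ∧ Jl n ≤ Jmax) :
    (∃ L : ℝ, Filter.Tendsto (fun N : ℕ => plusProb c J β N) Filter.atTop (nhds L) ∧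
        1 / 2 < L) ↔
      Summable (fun n : ℕ =>
        ∏ i ∈ Finset.Icc 1 (n + 1), (((d i : ℝ) * Real.tanh (β * Jl i)) ^ 2)⁻¹) := by
  have hβJ : ∀ n, 0 < β * Jl (n + 1) := fun n =>
    mul_pos hβ (hJmin.trans_le (hJb _ n.succ_pos).1)
  have h : Admissible d (fun n => tanh (β * Jl n)) := fun n =>
    ⟨hd _, tanh_pos_of_pos (hβJ n), tanh_lt_one _⟩
  have hq : ∀ n, tanh (β * Jl (n + 1)) ^ 2 ≤ tanh (β * Jmax) ^ 2 := fun n =>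
    pow_le_pow_left₀ (tanh_pos_of_pos (hβJ n)).le
      (tanh_le_tanh (mul_le_mul_of_nonneg_left (hJb _ n.succ_pos).2 hβ.le)) 2
  simp_rw [plusProb_eq_rootMag β c J d Jl hc hJl, exists_tendsto_one_add_div_two_iff,
    ← invGrowth_eq_prod_Icc]
  exact exists_tendsto_rootMag_pos_iff h hq (tanh_sq_lt_one _)
end
end

section
/- Let T be an infinite, locally finite, spherically symmetric rooted tree with no leaves: every vertex at distance n − 1 from the root o has exactly d_n ≥ 1 children. Let s > 0, κ₂ ≥ κ₁ > 0 and positive constants a_n, and let f_v = f_{|v|} : [0,∞) → [0,∞) depend only on |v| and satisfy a_{|v|} x / (1 + (κ₂ x)^s)^{1/s} ≤ f_v(x) ≤ a_{|v|} x / (1 + (κ₁ x)^s)^{1/s} for all v and x ≥ 0. Then there exists a nonzero family of nonnegative reals {x_v} satisfying x_v ≤ Σ_{v → w} f_w(x_w) for all v if and only if Σ_{n=1}^∞ Π_{j=1}^n (a_j d_j)^{-s} < ∞. -/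
open scoped ENNReal Classical
noncomputable section
/-!
The substitution `u = x ^ (-s)` linearises the problem: for
`σ t = t / (1 + (κ t) ^ s) ^ (1 / s)` (`saturate s κ t` below) one has
`(A σ t) ^ (-s) = A ^ (-s) (t ^ (-s) + κ ^ s)`. Following from a vertex with `x_v > 0` a ray of
children that maximise `f_w(x_w)`, a solution yields `u_n ≥ Q_n (u_{n+1} + κ₁ ^ s)` with
`Q_n = (a d) ^ (-s)` along the ray, and iterating bounds `κ₁ ^ s ∑_n ∏_{j ≤ n} Q_j` by `u_0`.
Conversely, when the series converges, its normalised tails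
`u_n = κ₂ ^ s ∑_{m ≥ n} ∏_{j ≤ m} Q_j / ∏_{j < n} Q_j` solve the recursion with equality, and
`x_v = u_{|v|} ^ (-1 / s)` is a radial solution.
-/

open Finset

def saturate (s κ t : ℝ) : ℝ := t / (1 + (κ * t) ^ s) ^ (1 / s)

section saturate

variable {s κ t : ℝ}

lemma saturate_pos (hκ : 0 ≤ κ) (ht : 0 < t) : 0 < saturate s κ t := by
  unfold saturate; positivity

lemma saturate_rpow_neg (hs : 0 < s) (hκ : 0 ≤ κ) (ht : 0 < t) :
    saturate s κ t ^ (-s) = t ^ (-s) + κ ^ s := by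
  have hB : 0 < 1 + (κ * t) ^ s := by positivity
  rw [saturate, Real.div_rpow ht.le (by positivity), ← Real.rpow_mul hB.le,
    show 1 / s * -s = -1 by field_simp, Real.rpow_neg_one, Real.mul_rpow hκ ht.le,
    Real.rpow_neg ht.le]
  field_simp

lemma saturate_rpow_neg_one_div (hs : 0 < s) (hκ : 0 ≤ κ) {u : ℝ} (hu : 0 < u) :
    saturate s κ (u ^ (-(1 / s))) = (u + κ ^ s) ^ (-(1 / s)) := by
  have ht : 0 < u ^ (-(1 / s)) := by positivity
  have hinv : (u ^ (-(1 / s))) ^ (-s) = u := by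
    rw [← Real.rpow_mul hu.le, show -(1 / s) * -s = 1 by field_simp, Real.rpow_one]
  calc saturate s κ (u ^ (-(1 / s)))
      = (saturate s κ (u ^ (-(1 / s))) ^ (-s)) ^ (-(1 / s)) := by
        rw [← Real.rpow_mul (saturate_pos hκ ht).le, show -s * -(1 / s) = 1 by field_simp,
          Real.rpow_one]
    _ = (u + κ ^ s) ^ (-(1 / s)) := by rw [saturate_rpow_neg hs hκ ht, hinv]

end saturate

section linear

variable {Q u : ℕ → ℝ} {c : ℝ}

lemma sum_prod_range_le_of_mul_add_le (hQ : ∀ n, 0 ≤ Q n)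
    (h : ∀ n, Q n * (u (n + 1) + c) ≤ u n) (N : ℕ) :
    c * ∑ m ∈ range N, ∏ j ∈ range (m + 1), Q j + (∏ j ∈ range N, Q j) * u N ≤ u 0 := by
  induction N with
  | zero => simp
  | succ N ih =>
    have hstep := mul_le_mul_of_nonneg_left (h N) (prod_nonneg (s := range N) fun j _ => hQ j)
    rw [sum_range_succ, prod_range_succ]
    linarith

lemma summable_prod_of_mul_add_le (hQ : ∀ n, 0 ≤ Q n) (hc : 0 < c) (hu : ∀ n, 0 ≤ u n)
    (h : ∀ n, Q n * (u (n + 1) + c) ≤ u n) :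
    Summable fun n => ∏ j ∈ range (n + 1), Q j := by
  refine summable_of_sum_range_le (c := u 0 / c) (fun n => prod_nonneg fun j _ => hQ j)
    fun N => (le_div_iff₀' hc).2 ?_
  have := mul_nonneg (prod_nonneg (s := range N) fun j _ => hQ j) (hu N)
  linarith [sum_prod_range_le_of_mul_add_le hQ h N]

lemma exists_eq_mul_add_of_summable (hQ : ∀ n, 0 < Q n) (hc : 0 < c)
    (hsum : Summable fun n => ∏ j ∈ range (n + 1), Q j) :
    ∃ u : ℕ → ℝ, (∀ n, 0 < u n) ∧ ∀ n, u n = Q n * (u (n + 1) + c) := by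
  have hC : ∀ n, 0 < ∏ j ∈ range n, Q j := fun n => prod_pos fun j _ => hQ j
  have htail : ∀ n, Summable fun m => ∏ j ∈ range (m + n + 1), Q j := fun n =>
    (summable_nat_add_iff (f := fun m => ∏ j ∈ range (m + 1), Q j) n).2 hsum
  refine ⟨fun n => c * (∑' m, ∏ j ∈ range (m + n + 1), Q j) / ∏ j ∈ range n, Q j,
    fun n => ?_, fun n => ?_⟩
  · exact div_pos (mul_pos hc ((htail n).tsum_pos (fun m => (hC _).le) 0 (hC _))) (hC n)
  · have hrec : ∑' m, ∏ j ∈ range (m + n + 1), Q j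
        = ∏ j ∈ range (n + 1), Q j + ∑' m, ∏ j ∈ range (m + (n + 1) + 1), Q j := by
      rw [(htail n).tsum_eq_zero_add]
      simp only [zero_add, add_right_comm _ 1 n, ← add_assoc]
    beta_reduce
    rw [hrec, prod_range_succ Q n]
    field_simp [(hC n).ne', (hQ n).ne']
    ring

end linear

section saturated

variable {s κ : ℝ} {A : ℕ → ℝ}

lemma summable_prod_of_le_mul_saturate (hs : 0 < s) (hκ : 0 < κ) (hA : ∀ n, 0 < A n)
    {y : ℕ → ℝ} (hy0 : 0 < y 0) (hy : ∀ n, 0 ≤ y n)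
    (h : ∀ n, y n ≤ A n * saturate s κ (y (n + 1))) :
    Summable fun n => ∏ j ∈ range (n + 1), (A j ^ s)⁻¹ := by
  have hpos : ∀ n, 0 < y n := by
    intro n
    induction n with
    | zero => exact hy0
    | succ n ih =>
      refine (hy (n + 1)).lt_of_ne fun h0 => ?_
      have := h n
      rw [← h0, saturate, mul_zero, zero_div, mul_zero] at this
      linarith
  refine summable_prod_of_mul_add_le (u := fun n => y n ^ (-s)) (c := κ ^ s)
    (fun n => inv_nonneg.2 (Real.rpow_nonneg (hA n).le s)) (Real.rpow_pos_of_pos hκ s)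
    (fun n => Real.rpow_nonneg (hy n) _) fun n => ?_
  have hmono := Real.rpow_le_rpow_of_nonpos (hpos n) (h n) (neg_nonpos.2 hs.le)
  rwa [Real.mul_rpow (hA n).le (saturate_pos hκ.le (hpos _)).le,
    saturate_rpow_neg hs hκ.le (hpos _), Real.rpow_neg (hA n).le] at hmono

lemma exists_eq_mul_saturate_of_summable (hs : 0 < s) (hκ : 0 < κ) (hA : ∀ n, 0 < A n)
    (hsum : Summable fun n => ∏ j ∈ range (n + 1), (A j ^ s)⁻¹) :
    ∃ y : ℕ → ℝ, (∀ n, 0 < y n) ∧ ∀ n, y n = A n * saturate s κ (y (n + 1)) := by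
  obtain ⟨u, hu, hrec⟩ := exists_eq_mul_add_of_summable
    (fun n => inv_pos.2 (Real.rpow_pos_of_pos (hA n) s)) (Real.rpow_pos_of_pos hκ s) hsum
  refine ⟨fun n => u n ^ (-(1 / s)), fun n => Real.rpow_pos_of_pos (hu n) _, fun n => ?_⟩
  have hA' : (A n ^ s)⁻¹ ^ (-(1 / s)) = A n := by
    rw [← Real.rpow_neg (hA n).le, ← Real.rpow_mul (hA n).le,
      show -s * -(1 / s) = 1 by field_simp, Real.rpow_one]
  dsimp only
  rw [saturate_rpow_neg_one_div hs hκ.le (hu _), hrec n, add_comm,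
    Real.mul_rpow (inv_nonneg.2 (Real.rpow_nonneg (hA n).le s))
      (add_pos (Real.rpow_pos_of_pos hκ s) (hu _)).le, hA']

end saturated

lemma summable_prod_range_of_summable_prod_range_add {b : ℕ → ℝ} (k : ℕ)
    (h : Summable fun n => ∏ j ∈ range (n + 1), b (k + j)) :
    Summable fun n => ∏ j ∈ range (n + 1), b j := by
  refine (summable_nat_add_iff (f := fun n => ∏ j ∈ range (n + 1), b j) k).1 ?_
  refine (h.mul_left (∏ j ∈ range k, b j)).congr fun n => ?_
  rw [show n + k + 1 = k + (n + 1) by ring, prod_range_add b k (n + 1)]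

lemma prod_Icc_one_eq_prod_range {M : Type*} [CommMonoid M] (b : ℕ → M) (n : ℕ) :
    ∏ j ∈ Icc 1 n, b j = ∏ j ∈ range n, b (j + 1) := by
  rw [← Ico_add_one_right_eq_Icc, prod_Ico_eq_prod_range]
  simp [add_comm]

section tree

variable {c : Vtx → ℕ} {x g : Vtx → ℝ}

lemma exists_child_le_mul {v : Vtx} (hc : 0 < c v)
    (hv : x v ≤ ∑ i ∈ range (c v), g (v ++ [i])) :
    ∃ i < c v, x v ≤ c v * g (v ++ [i]) := by
  obtain ⟨i, hi, hmax⟩ := exists_max_image (range (c v)) (fun i => g (v ++ [i]))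
    ⟨0, mem_range.2 hc⟩
  refine ⟨i, mem_range.1 hi, hv.trans ?_⟩
  simpa using sum_le_card_nsmul _ _ _ hmax

lemma exists_ray (hc : ∀ v, 0 < c v)
    (hx : ∀ v, IsVtx c v → x v ≤ ∑ i ∈ range (c v), g (v ++ [i])) {v₀ : Vtx} (hv₀ : IsVtx c v₀) :
    ∃ V : ℕ → Vtx, V 0 = v₀ ∧ (∀ m, IsVtx c (V m)) ∧ (∀ m, (V m).length = v₀.length + m) ∧
      ∀ m, x (V m) ≤ c (V m) * g (V (m + 1)) := by
  have hchild : ∀ v, IsVtx c v → ∃ i < c v, x v ≤ c v * g (v ++ [i]) :=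
    fun v hv => exists_child_le_mul (hc v) (hx v hv)
  choose! next hnext_lt hnext_le using hchild
  let V : ℕ → Vtx := fun m => Nat.rec v₀ (fun _ w => w ++ [next w]) m
  have hV : ∀ m, IsVtx c (V m) := fun m => by
    induction m with
    | zero => exact hv₀
    | succ m ih => exact ih.child (hnext_lt _ ih)
  refine ⟨V, rfl, hV, fun m => ?_, fun m => hnext_le _ (hV m)⟩
  induction m with
  | zero => rfl
  | succ m ih =>
    change (V m ++ [next (V m)]).length = _
    rw [List.length_append, ih, List.length_singleton, add_assoc]

end tree

/-- The spherically symmetric tree in which every vertex at distance `n - 1` from the root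
has exactly `d n` children: a vertex at distance `k` has `d (k+1)` children. -/
theorem stmt11 (d : ℕ → ℕ) (hd : ∀ n, 1 ≤ d n)
    (s : ℝ) (hs : 0 < s) (κ₁ κ₂ : ℝ) (hκ₁ : 0 < κ₁) (hκ₁₂ : κ₁ ≤ κ₂)
    (a : ℕ → ℝ) (ha : ∀ n : ℕ, 1 ≤ n → 0 < a n)
    (f : ℕ → ℝ → ℝ)
    (hf : ∀ n : ℕ, 1 ≤ n → ∀ x : ℝ, 0 ≤ x →
      a n * x / (1 + (κ₂ * x) ^ s) ^ (1 / s) ≤ f n x ∧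
        f n x ≤ a n * x / (1 + (κ₁ * x) ^ s) ^ (1 / s)) :
    (∃ x : Vtx → ℝ,
        (∀ v, IsVtx (fun v => d (v.length + 1)) v → 0 ≤ x v) ∧
        (∃ v, IsVtx (fun v => d (v.length + 1)) v ∧ x v ≠ 0) ∧
        ∀ v, IsVtx (fun v => d (v.length + 1)) v →
          x v ≤ ∑ i ∈ Finset.range (d (v.length + 1)),
            f (v.length + 1) (x (v ++ [i]))) ↔
      Summable (fun n : ℕ =>
        ∏ j ∈ Finset.Icc 1 (n + 1), ((a j * (d j : ℝ)) ^ s)⁻¹) := by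
  have hA : ∀ n, 0 < a (n + 1) * d (n + 1) := fun n =>
    mul_pos (ha _ n.succ_pos) (Nat.cast_pos.2 (hd _))
  have hf' : ∀ n x, 0 ≤ x →
      a (n + 1) * saturate s κ₂ x ≤ f (n + 1) x ∧ f (n + 1) x ≤ a (n + 1) * saturate s κ₁ x := by
    simpa only [saturate, mul_div_assoc] using fun n => hf (n + 1) n.succ_pos
  simp_rw [prod_Icc_one_eq_prod_range]
  constructor
  · rintro ⟨x, hx0, ⟨v₀, hv₀, hxv₀⟩, hx⟩
    have hx' : ∀ v, IsVtx (fun v => d (v.length + 1)) v →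
        x v ≤ ∑ i ∈ range (d (v.length + 1)), f (v ++ [i]).length (x (v ++ [i])) := by
      simpa only [List.length_append, List.length_singleton] using hx
    obtain ⟨V, rfl, hV, hlen, hray⟩ :=
      exists_ray (g := fun w => f w.length (x w)) (fun v => hd _) hx' hv₀
    set k := (V 0).length
    have hstep : ∀ m,
        x (V m) ≤ (a (k + m + 1) * d (k + m + 1)) * saturate s κ₁ (x (V (m + 1))) := by
      intro m
      calc x (V m) ≤ d (k + m + 1) * f (k + m + 1) (x (V (m + 1))) := by
            simpa only [hlen, add_assoc] using hray m
        _ ≤ d (k + m + 1) * (a (k + m + 1) * saturate s κ₁ (x (V (m + 1)))) :=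
            mul_le_mul_of_nonneg_left (hf' _ _ (hx0 _ (hV _))).2 (Nat.cast_nonneg _)
        _ = _ := by ring
    exact summable_prod_range_of_summable_prod_range_add k
      (summable_prod_of_le_mul_saturate hs hκ₁ (fun n => hA _) ((hx0 _ hv₀).lt_of_ne' hxv₀)
        (fun m => hx0 _ (hV m)) hstep)
  · intro hsum
    obtain ⟨y, hy, hrec⟩ := exists_eq_mul_saturate_of_summable hs (hκ₁.trans_le hκ₁₂) hA hsum
    refine ⟨fun v => y v.length, fun v _ => (hy _).le, ⟨[], .root, (hy 0).ne'⟩, fun v _ => ?_⟩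
    simp only [List.length_append, List.length_singleton, sum_const, card_range, nsmul_eq_mul]
    calc y v.length
        = d (v.length + 1) * (a (v.length + 1) * saturate s κ₂ (y (v.length + 1))) := by
          rw [hrec]; ring
      _ ≤ d (v.length + 1) * f (v.length + 1) (y (v.length + 1)) :=
          mul_le_mul_of_nonneg_left (hf' _ _ (hy _).le).1 (Nat.cast_nonneg _)
end
end

section
/- For θ ∈ (0,1), define f_θ(x) = log[(cosh(x/2) + θ sinh(x/2)) / (cosh(x/2) − θ sinh(x/2))]. Then f_θ is a strictly increasing odd function on ℝ, concave on [0,∞). Moreover, for every compact interval I ⊂ (0,1) there exist constants κ₂ ≥ κ₁ > 0, depending only on I, such that θ x / (1 + κ₂ x²)^{1/2} ≤ f_θ(x) ≤ θ x / (1 + κ₁ x²)^{1/2} for all x > 0 and all θ ∈ I. -/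
noncomputable section

/-- `f_θ(x) = log[(cosh(x/2) + θ sinh(x/2)) / (cosh(x/2) − θ sinh(x/2))]`. -/
def fbias (θ x : ℝ) : ℝ :=
  Real.log ((Real.cosh (x / 2) + θ * Real.sinh (x / 2)) /
    (Real.cosh (x / 2) - θ * Real.sinh (x / 2)))

/-!
Dividing through by `cosh (x / 2)` gives `f_θ x = log ((1 + θ t) / (1 - θ t))` with
`t = tanh (x / 2)`, and `f_θ' x = θ / (1 + (1 - θ²) sinh² (x / 2))`; this derivative is positive
and decreasing on `[0, ∞)`. The lower bound follows from `log ((1 + v) / (1 - v)) ≥ 2 v` and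
`tanh u ≥ u / √(1 + u²)`. For the upper bound, `g x = θ x / √(1 + κ x²)` has
`g' x = θ / (1 + κ x²) ^ (3 / 2)`, and `sinh u ≥ u + u³ / 6` gives
`(1 + κ x²) ^ (3 / 2) ≤ 1 + (1 - θ²) sinh² (x / 2)` once `12 κ ≤ 1 - θ²`, so `f_θ ≤ g`.
-/

open Real Set

theorem Real.two_mul_le_log_div {v : ℝ} (h0 : 0 ≤ v) (h1 : v < 1) :
    2 * v ≤ log ((1 + v) / (1 - v)) := by
  have hs := hasSum_log_sub_log_of_abs_lt_one (abs_lt.2 ⟨by linarith, h1⟩)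
  rw [← log_div (by linarith) (by linarith)] at hs
  simpa using sum_le_hasSum (Finset.range 1) (fun k _ => by positivity) hs

theorem Real.add_pow_three_div_six_le_sinh {u : ℝ} (hu : 0 ≤ u) : u + u ^ 3 / 6 ≤ sinh u := by
  have := sum_le_hasSum (Finset.range 2) (fun k _ => by positivity) (hasSum_sinh u)
  norm_num [Finset.sum_range_succ, Nat.factorial] at this
  linarith

theorem Real.div_sqrt_one_add_sq_le_tanh {u : ℝ} (hu : 0 ≤ u) : u / √(1 + u ^ 2) ≤ tanh u := by
  have hs : u ≤ sinh u := self_le_sinh_iff.2 hu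
  rw [tanh_eq_sinh_div_cosh, div_le_div_iff₀ (by positivity) (cosh_pos u)]
  refine le_of_pow_le_pow_left₀ two_ne_zero (by positivity [hu.trans hs]) ?_
  rw [mul_pow, mul_pow, sq_sqrt (by positivity), cosh_sq]
  nlinarith [mul_le_mul hs hs hu (hu.trans hs)]

theorem Real.cosh_add_mul_sinh_pos {θ : ℝ} (hθ : |θ| ≤ 1) (u : ℝ) : 0 < cosh u + θ * sinh u := by
  have h : |θ * sinh u| < cosh u := by
    rw [abs_mul, ← cosh_abs, abs_sinh]
    exact (mul_le_of_le_one_left (sinh_nonneg_iff.2 (abs_nonneg u)) hθ).trans_lt (sinh_lt_cosh _)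
  linarith [neg_abs_le (θ * sinh u)]

theorem Real.cosh_sub_mul_sinh_pos {θ : ℝ} (hθ : |θ| ≤ 1) (u : ℝ) : 0 < cosh u - θ * sinh u := by
  simpa [sub_eq_add_neg] using cosh_add_mul_sinh_pos (θ := -θ) (by rwa [abs_neg]) u

theorem fbias_eq_log_tanh (θ x : ℝ) :
    fbias θ x = log ((1 + θ * tanh (x / 2)) / (1 - θ * tanh (x / 2))) := by
  have := (cosh_pos (x / 2)).ne'
  rw [fbias, tanh_eq_sinh_div_cosh]
  congr 1
  field_simp

theorem fbias_neg (θ x : ℝ) : fbias θ (-x) = -fbias θ x := by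
  rw [fbias, fbias, neg_div, cosh_neg, sinh_neg, ← log_inv, inv_div, mul_neg, sub_neg_eq_add,
    ← sub_eq_add_neg]

theorem hasDerivAt_fbias {θ : ℝ} (hθ : |θ| ≤ 1) (x : ℝ) :
    HasDerivAt (fbias θ) (θ / (1 + (1 - θ ^ 2) * sinh (x / 2) ^ 2)) x := by
  have hhalf : HasDerivAt (fun y : ℝ => y / 2) (1 / 2) x := (hasDerivAt_id x).div_const 2
  have hA : HasDerivAt (fun y => cosh (y / 2) + θ * sinh (y / 2))
      (sinh (x / 2) * (1 / 2) + θ * (cosh (x / 2) * (1 / 2))) x :=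
    hhalf.cosh.add (hhalf.sinh.const_mul θ)
  have hB : HasDerivAt (fun y => cosh (y / 2) - θ * sinh (y / 2))
      (sinh (x / 2) * (1 / 2) - θ * (cosh (x / 2) * (1 / 2))) x :=
    hhalf.cosh.sub (hhalf.sinh.const_mul θ)
  have hApos := cosh_add_mul_sinh_pos hθ (x / 2)
  have hBpos := cosh_sub_mul_sinh_pos hθ (x / 2)
  refine ((hA.div hB hBpos.ne').log (div_pos hApos hBpos).ne').congr_deriv ?_
  rw [show 1 + (1 - θ ^ 2) * sinh (x / 2) ^ 2 =
      (cosh (x / 2) + θ * sinh (x / 2)) * (cosh (x / 2) - θ * sinh (x / 2)) by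
    linear_combination -cosh_sq (x / 2)]
  have := hApos.ne'
  have := hBpos.ne'
  simp only [Pi.div_apply]
  field_simp
  congr 1
  linear_combination 2 * θ * cosh_sq_sub_sinh_sq (x / 2)

theorem strictMono_fbias {θ : ℝ} (hθ0 : 0 < θ) (hθ1 : θ ≤ 1) : StrictMono (fbias θ) := by
  have hc : 0 ≤ 1 - θ ^ 2 := by nlinarith
  exact strictMono_of_hasDerivAt_pos (hasDerivAt_fbias (abs_le.2 ⟨by linarith, hθ1⟩))
    fun x => div_pos hθ0 (add_pos_of_pos_of_nonneg one_pos (mul_nonneg hc (sq_nonneg _)))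

theorem concaveOn_fbias {θ : ℝ} (hθ0 : 0 ≤ θ) (hθ1 : θ ≤ 1) : ConcaveOn ℝ (Ici 0) (fbias θ) := by
  have hc : 0 ≤ 1 - θ ^ 2 := by nlinarith
  have hf := hasDerivAt_fbias (abs_le.2 ⟨by linarith, hθ1⟩)
  have hd : Differentiable ℝ (fbias θ) := fun x => (hf x).differentiableAt
  refine AntitoneOn.concaveOn_of_deriv (convex_Ici 0) hd.continuous.continuousOn hd.differentiableOn ?_
  rw [funext fun x => (hf x).deriv, interior_Ici]
  intro x hx y _ hxy
  have hsx : 0 ≤ sinh (x / 2) := sinh_nonneg_iff.2 (half_pos hx).le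
  have hsxy : sinh (x / 2) ≤ sinh (y / 2) := sinh_le_sinh.2 (by linarith)
  dsimp only
  gcongr

theorem div_sqrt_le_fbias {θ x : ℝ} (hθ0 : 0 ≤ θ) (hθ1 : θ ≤ 1) (hx : 0 ≤ x) :
    θ * x / √(1 + 1 / 4 * x ^ 2) ≤ fbias θ x := by
  have ht := div_sqrt_one_add_sq_le_tanh (by positivity : 0 ≤ x / 2)
  have ht0 : 0 ≤ tanh (x / 2) := le_trans (by positivity) ht
  have hv : θ * tanh (x / 2) < 1 :=
    (mul_le_of_le_one_left ht0 hθ1).trans_lt (tanh_lt_one _)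
  calc θ * x / √(1 + 1 / 4 * x ^ 2) = 2 * (θ * (x / 2 / √(1 + (x / 2) ^ 2))) := by ring_nf
    _ ≤ 2 * (θ * tanh (x / 2)) := by gcongr
    _ ≤ log ((1 + θ * tanh (x / 2)) / (1 - θ * tanh (x / 2))) :=
      two_mul_le_log_div (by positivity) hv
    _ = fbias θ x := (fbias_eq_log_tanh θ x).symm

theorem one_add_mul_sq_div_three_pow_three_le {m : ℝ} (hm0 : 0 ≤ m) (hm1 : m ≤ 1) (u : ℝ) :
    (1 + m * u ^ 2 / 3) ^ 3 ≤ (1 + m * (u + u ^ 3 / 6) ^ 2) ^ 2 := by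
  have hy := sq_nonneg u
  nlinarith [sq_nonneg (m * (u + u ^ 3 / 6) ^ 2), mul_nonneg hm0 hy,
    mul_nonneg (mul_nonneg hm0 (sub_nonneg.2 hm1)) (pow_nonneg hy 2),
    mul_nonneg (mul_nonneg hm0 (sub_nonneg.2 hm1)) (pow_nonneg hy 3),
    mul_nonneg (mul_nonneg (mul_nonneg hm0 hm0) (sub_nonneg.2 hm1)) (pow_nonneg hy 3),
    mul_nonneg hm0 (pow_nonneg hy 2), mul_nonneg hm0 (pow_nonneg hy 3)]

theorem sqrt_one_add_mul_sq_pow_three_le {m c x : ℝ} (hm0 : 0 ≤ m) (hm1 : m ≤ 1) (hmc : m ≤ c)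
    (hx : 0 ≤ x) : √(1 + m / 12 * x ^ 2) ^ 3 ≤ 1 + c * sinh (x / 2) ^ 2 := by
  have hs := add_pow_three_div_six_le_sinh (by positivity : 0 ≤ x / 2)
  have hs2 : (x / 2 + (x / 2) ^ 3 / 6) ^ 2 ≤ sinh (x / 2) ^ 2 := by gcongr
  calc √(1 + m / 12 * x ^ 2) ^ 3 ≤ 1 + m * sinh (x / 2) ^ 2 := by
        refine le_of_pow_le_pow_left₀ two_ne_zero (by positivity) ?_
        rw [pow_right_comm, sq_sqrt (by positivity)]
        calc (1 + m / 12 * x ^ 2) ^ 3 = (1 + m * (x / 2) ^ 2 / 3) ^ 3 := by ring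
          _ ≤ (1 + m * (x / 2 + (x / 2) ^ 3 / 6) ^ 2) ^ 2 :=
            one_add_mul_sq_div_three_pow_three_le hm0 hm1 _
          _ ≤ (1 + m * sinh (x / 2) ^ 2) ^ 2 := by gcongr
    _ ≤ 1 + c * sinh (x / 2) ^ 2 := by gcongr

theorem hasDerivAt_mul_div_sqrt_one_add_mul_sq {κ : ℝ} (hκ : 0 ≤ κ) (θ t : ℝ) :
    HasDerivAt (fun t => θ * t / √(1 + κ * t ^ 2)) (θ / √(1 + κ * t ^ 2) ^ 3) t := by
  have hD : 0 < 1 + κ * t ^ 2 := by positivity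
  have hinner : HasDerivAt (fun t => 1 + κ * t ^ 2) (κ * (2 * t)) t := by
    simpa using ((hasDerivAt_pow 2 t).const_mul κ).const_add 1
  refine (((hasDerivAt_id t).const_mul θ).div (hinner.sqrt hD.ne')
    (sqrt_pos.2 hD).ne').congr_deriv ?_
  have := (sqrt_pos.2 hD).ne'
  simp only [id]
  field_simp
  linear_combination θ * sq_sqrt hD.le

theorem fbias_le_div_sqrt {θ m x : ℝ} (hθ : 0 ≤ θ) (hm0 : 0 ≤ m) (hmθ : m ≤ 1 - θ ^ 2)
    (hx : 0 ≤ x) : fbias θ x ≤ θ * x / √(1 + m / 12 * x ^ 2) := by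
  have hf := hasDerivAt_fbias ((sq_le_one_iff_abs_le_one θ).1 (by nlinarith))
  have hg := hasDerivAt_mul_div_sqrt_one_add_mul_sq (by positivity : 0 ≤ m / 12) θ
  refine image_le_of_deriv_right_le_deriv_boundary
    (fun y _ => (hf y).continuousAt.continuousWithinAt) (fun y _ => (hf y).hasDerivWithinAt)
    (by simp [fbias]) (fun y _ => (hg y).continuousAt.continuousWithinAt)
    (fun y _ => (hg y).hasDerivWithinAt) (fun y hy => ?_) ⟨hx, le_rfl⟩
  have hD := sqrt_one_add_mul_sq_pow_three_le hm0 (by nlinarith) hmθ hy.1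
  have := sqrt_nonneg (1 + m / 12 * y ^ 2)
  gcongr

theorem stmt13 :
    (∀ θ : ℝ, θ ∈ Set.Ioo (0 : ℝ) 1 →
      StrictMono (fbias θ) ∧ (∀ x : ℝ, fbias θ (-x) = -(fbias θ x)) ∧
        ConcaveOn ℝ (Set.Ici 0) (fbias θ)) ∧
    (∀ a b : ℝ, 0 < a → a ≤ b → b < 1 →
      ∃ κ₁ κ₂ : ℝ, 0 < κ₁ ∧ κ₁ ≤ κ₂ ∧
        ∀ θ ∈ Set.Icc a b, ∀ x : ℝ, 0 < x →
          θ * x / Real.sqrt (1 + κ₂ * x ^ 2) ≤ fbias θ x ∧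
            fbias θ x ≤ θ * x / Real.sqrt (1 + κ₁ * x ^ 2)) := by
  refine ⟨fun θ ⟨hθ0, hθ1⟩ => ⟨strictMono_fbias hθ0 hθ1.le, fbias_neg θ,
    concaveOn_fbias hθ0.le hθ1.le⟩, fun a b ha hab hb => ?_⟩
  refine ⟨(1 - b ^ 2) / 12, 1 / 4, by nlinarith, by nlinarith, fun θ ⟨hθa, hθb⟩ x hx => ?_⟩
  have hθ0 : 0 ≤ θ := by linarith
  exact ⟨div_sqrt_le_fbias hθ0 (by linarith) hx.le,
    fbias_le_div_sqrt hθ0 (by nlinarith) (by nlinarith) hx.le⟩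
end
end

section
/- Let T^(N) be the depth-N truncation of a rooted tree with root o, interaction strengths J_w > 0 and inverse temperature β > 0, and fix a vertex v with |v| < N. Let P_v^(N) be the free-boundary Ising measure on the subtree T^(N)(v), let X_v^(N) be the log-likelihood ratio at v given the boundary configuration, and let Q_v^{N+} be the conditional law of the boundary configuration given η(v) = +1. Then for every odd function φ : ℝ → ℝ, ∫ φ(X_v^(N)) dQ_v^{N+} = ∫ φ(|X_v^(N)|) tanh(|X_v^(N)|/2) dP_v^(N), where on the right X_v^(N) is integrated against the law of the boundary configuration induced by P_v^(N). -/
open scoped ENNReal Classical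

noncomputable section

/-- The log-likelihood ratio `log [P(η(root) = +1 | ξ) / P(η(root) = -1 | ξ)]` at the root of
the depth-`M` truncated tree with child counts `c`, interactions `J`, inverse temperature `β`
and boundary condition `ξ` imposed on the level-`M` vertices. -/
def condRatio (c : Vtx → ℕ) (J : Vtx → ℝ) (β : ℝ) (M : ℕ) (ξ : Vtx → Bool) : ℝ :=
  Real.log
    ((∑ σ : Conf c M, if (∀ x : {v // v ∈ verts c M}, x.1 ∈ lev c M → σ x = ξ x.1)
        ∧ spin c M σ [] = 1 then wt c J β M σ else 0) /
     (∑ σ : Conf c M, if (∀ x : {v // v ∈ verts c M}, x.1 ∈ lev c M → σ x = ξ x.1)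
        ∧ spin c M σ [] = -1 then wt c J β M σ else 0))

/-- The child-count function of the subtree `T(v)` rooted at `v`. -/
def subC (c : Vtx → ℕ) (v : Vtx) : Vtx → ℕ := fun w => c (v ++ w)

/-- The interaction strengths of the subtree `T(v)` rooted at `v`. -/
def subJ (J : Vtx → ℝ) (v : Vtx) : Vtx → ℝ := fun w => J (v ++ w)

/-- The boundary configuration (on level-`M` vertices) induced by a configuration `σ`. -/
def bdOf (c : Vtx → ℕ) (M : ℕ) (σ : Conf c M) : Vtx → Bool :=
  fun w => if h : w ∈ verts c M then σ ⟨w, h⟩ else true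

/-- `X_v^(N)`: the log-likelihood ratio at the root of the subtree, as a function of the
boundary of the configuration `σ`. -/
def Xof (c : Vtx → ℕ) (J : Vtx → ℝ) (β : ℝ) (M : ℕ) (σ : Conf c M) : ℝ :=
  condRatio c J β M (bdOf c M σ)

/-!
Flipping all spins preserves the weight and negates both the root spin `s` and `X`. Within the
fibre of a boundary configuration, let `a` and `b` be the total weights with `s = 1` and `s = -1`;
then `X = log (a / b)` is constant on the fibre and the conditional mean of `s` there is
`(a - b) / (a + b) = tanh (X / 2)`. Hence
`Σ W φ(|X|) tanh(|X| / 2) = Σ W φ(X) tanh(X / 2) = Σ W s φ(X)`, and by the flip symmetry (with `φ`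
odd) the last sum is twice the sum over `s = 1`, just as the total weight is twice the weight of
`s = 1`.
-/

open Finset Real

theorem tanh_half_log_div {a b : ℝ} (ha : 0 < a) (hb : 0 < b) :
    tanh (log (a / b) / 2) = (a - b) / (a + b) := by
  have hx : (a - b) / (a + b) ∈ Set.Ioo (-1) 1 := by
    rw [Set.mem_Ioo, lt_div_iff₀ (by positivity), div_lt_one (by positivity)]
    constructor <;> linarith
  have hratio : (1 + (a - b) / (a + b)) / (1 - (a - b) / (a + b)) = a / b := by
    have hab : a + b ≠ 0 := by positivity
    rw [one_add_div hab, one_sub_div hab, div_div_div_cancel_right₀ hab]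
    ring
  rw [← tanh_artanh hx, artanh_eq_half_log (Set.Ioo_subset_Icc_self hx), hratio,
    one_div_mul_eq_div]

theorem mul_odd_mul_tanh_half_log_div {a b : ℝ} (ha : 0 ≤ a) (hb : 0 ≤ b) {φ : ℝ → ℝ}
    (hφ : φ.Odd) :
    (a + b) * (φ (log (a / b)) * tanh (log (a / b) / 2)) = (a - b) * φ (log (a / b)) := by
  -- If `a` or `b` vanishes then `log (a / b) = log 0 = 0`, and `φ 0 = 0`.
  rcases ha.eq_or_lt with rfl | ha
  · simp [hφ.map_zero]
  rcases hb.eq_or_lt with rfl | hb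
  · simp [hφ.map_zero]
  rw [tanh_half_log_div ha hb]
  field_simp

theorem sum_eq_sum_ite_add_sum_ite_of_sign {ι : Type*} {s : Finset ι} {ε : ι → ℝ}
    (hε : ∀ i ∈ s, ε i = 1 ∨ ε i = -1) (f : ι → ℝ) :
    ∑ i ∈ s, f i =
      (∑ i ∈ s, if ε i = 1 then f i else 0) + ∑ i ∈ s, if ε i = -1 then f i else 0 := by
  rw [← sum_add_distrib]
  refine sum_congr rfl fun i hi => ?_
  rcases hε i hi with h | h <;> norm_num [h]

theorem sum_mul_eq_sum_ite_sub_sum_ite_of_sign {ι : Type*} {s : Finset ι} {ε : ι → ℝ}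
    (hε : ∀ i ∈ s, ε i = 1 ∨ ε i = -1) (f : ι → ℝ) :
    ∑ i ∈ s, ε i * f i =
      (∑ i ∈ s, if ε i = 1 then f i else 0) - ∑ i ∈ s, if ε i = -1 then f i else 0 := by
  rw [← sum_sub_distrib]
  refine sum_congr rfl fun i hi => ?_
  rcases hε i hi with h | h <;> norm_num [h]

section Tree

variable {c : Vtx → ℕ} {M : ℕ}

theorem lev_subset_verts {n : ℕ} (hn : n ≤ M) : lev c n ⊆ verts c M := fun _ hw =>
  mem_biUnion.2 ⟨n, mem_range.2 (Nat.lt_succ_of_le hn), hw⟩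

theorem nil_mem_verts : [] ∈ verts c M :=
  lev_subset_verts (Nat.zero_le M) (mem_singleton_self _)

theorem dropLast_mem_lev {n : ℕ} {w : Vtx} (hw : w ∈ lev c (n + 1)) : w.dropLast ∈ lev c n := by
  simp only [lev, mem_biUnion, mem_image] at hw
  obtain ⟨u, hu, i, -, rfl⟩ := hw
  rwa [List.dropLast_concat]

end Tree

namespace Conf

variable {c : Vtx → ℕ} {M : ℕ}

def flip (σ : Conf c M) : Conf c M := fun x => !σ x

theorem flip_involutive : Function.Involutive (flip : Conf c M → Conf c M) :=
  fun σ => funext fun x => Bool.not_not (σ x)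

def bdry (σ : Conf c M) : lev c M → Bool := fun w => bdOf c M σ w

theorem bdOf_apply (σ : Conf c M) (x : {v // v ∈ verts c M}) : bdOf c M σ x.1 = σ x := by
  simp [bdOf, x.2]

theorem bdry_flip (σ : Conf c M) : σ.flip.bdry = fun w => !σ.bdry w := by
  funext w
  have hw : w.1 ∈ verts c M := lev_subset_verts le_rfl w.2
  simp [bdry, bdOf, hw, flip]

theorem forall_eq_bdOf_iff (σ' σ : Conf c M) :
    (∀ x : {v // v ∈ verts c M}, x.1 ∈ lev c M → σ' x = bdOf c M σ x.1) ↔ σ'.bdry = σ.bdry := by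
  simp only [← bdOf_apply σ', funext_iff, bdry, Subtype.forall]
  exact ⟨fun h w hw => h w (lev_subset_verts le_rfl hw) hw,
    fun h w _ hw => h w hw⟩

end Conf

section Ising

variable {c : Vtx → ℕ} {J : Vtx → ℝ} {β : ℝ} {M : ℕ}

theorem spin_flip (σ : Conf c M) {w : Vtx} (hw : w ∈ verts c M) :
    spin c M σ.flip w = -spin c M σ w := by
  cases h : σ ⟨w, hw⟩ <;> simp [spin, hw, Conf.flip, h]

theorem spin_nil_eq_one_or (σ : Conf c M) : spin c M σ [] = 1 ∨ spin c M σ [] = -1 := by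
  rw [spin, dif_pos nil_mem_verts]
  split <;> simp

theorem wt_pos (σ : Conf c M) : 0 < wt c J β M σ :=
  prod_pos fun _ _ => exp_pos _

theorem wt_flip (σ : Conf c M) : wt c J β M σ.flip = wt c J β M σ := by
  refine prod_congr rfl fun w hw => ?_
  obtain ⟨n, hn, hw⟩ := mem_biUnion.1 hw
  have hn : n < M := mem_range.1 hn
  rw [spin_flip σ (lev_subset_verts hn hw),
    spin_flip σ (lev_subset_verts hn.le (dropLast_mem_lev hw))]
  congr 1
  ring

theorem sum_spin_down_eq_sum_spin_up_flip (f : Conf c M → ℝ) :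
    (∑ σ, if spin c M σ [] = -1 then f σ else 0) =
      ∑ σ, if spin c M σ [] = 1 then f σ.flip else 0 := by
  rw [← Equiv.sum_comp (Conf.flip_involutive.toPerm _)]
  refine sum_congr rfl fun σ _ => ?_
  simp only [Function.Involutive.coe_toPerm, spin_flip σ nil_mem_verts, neg_inj]

variable (c J β M) in
def bdryWt (k : lev c M → Bool) (t : ℝ) : ℝ :=
  ∑ σ : Conf c M with σ.bdry = k, if spin c M σ [] = t then wt c J β M σ else 0

theorem bdryWt_nonneg (k : lev c M → Bool) (t : ℝ) : 0 ≤ bdryWt c J β M k t :=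
  sum_nonneg fun σ _ => ite_nonneg (wt_pos σ).le le_rfl

theorem Xof_eq_log_bdryWt (σ : Conf c M) :
    Xof c J β M σ = log (bdryWt c J β M σ.bdry 1 / bdryWt c J β M σ.bdry (-1)) := by
  simp only [Xof, condRatio, bdryWt, sum_filter, ← ite_and, Conf.forall_eq_bdOf_iff]

theorem bdryWt_not (k : lev c M → Bool) (t : ℝ) :
    bdryWt c J β M (fun w => !k w) t = bdryWt c J β M k (-t) := by
  rw [bdryWt, bdryWt, sum_filter, sum_filter, ← Equiv.sum_comp (Conf.flip_involutive.toPerm _)]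
  refine sum_congr rfl fun σ _ => ?_
  have hbdry : σ.flip.bdry = (fun w => !k w) ↔ σ.bdry = k := by
    simp only [Conf.bdry_flip, funext_iff, Bool.not_inj_iff]
  simp only [Function.Involutive.coe_toPerm, hbdry, spin_flip σ nil_mem_verts, wt_flip,
    neg_eq_iff_eq_neg]

theorem Xof_flip (σ : Conf c M) : Xof c J β M σ.flip = -Xof c J β M σ := by
  rw [Xof_eq_log_bdryWt, Xof_eq_log_bdryWt, Conf.bdry_flip, bdryWt_not, bdryWt_not, neg_neg,
    ← inv_div, log_inv]

theorem sum_fiber_wt_mul_odd_mul_tanh {φ : ℝ → ℝ} (hφ : φ.Odd) (k : lev c M → Bool) :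
    ∑ σ : Conf c M with σ.bdry = k,
        wt c J β M σ * (φ (Xof c J β M σ) * tanh (Xof c J β M σ / 2)) =
      ∑ σ : Conf c M with σ.bdry = k, spin c M σ [] * (wt c J β M σ * φ (Xof c J β M σ)) := by
  set a := bdryWt c J β M k 1
  set b := bdryWt c J β M k (-1)
  have hX : ∀ σ ∈ ({σ : Conf c M | σ.bdry = k} : Finset _), Xof c J β M σ = log (a / b) :=
    fun σ hσ => by rw [Xof_eq_log_bdryWt, (mem_filter.1 hσ).2]
  have hsign : ∀ σ ∈ ({σ : Conf c M | σ.bdry = k} : Finset _),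
      spin c M σ [] = 1 ∨ spin c M σ [] = -1 := fun σ _ => spin_nil_eq_one_or σ
  have hsum : ∑ σ : Conf c M with σ.bdry = k, wt c J β M σ = a + b :=
    sum_eq_sum_ite_add_sum_ite_of_sign hsign _
  have hdiff : ∑ σ : Conf c M with σ.bdry = k, spin c M σ [] * wt c J β M σ = a - b :=
    sum_mul_eq_sum_ite_sub_sum_ite_of_sign hsign _
  calc ∑ σ : Conf c M with σ.bdry = k,
        wt c J β M σ * (φ (Xof c J β M σ) * tanh (Xof c J β M σ / 2))
      = ∑ σ : Conf c M with σ.bdry = k,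
        wt c J β M σ * (φ (log (a / b)) * tanh (log (a / b) / 2)) :=
        sum_congr rfl fun σ hσ => by rw [hX σ hσ]
    _ = (a + b) * (φ (log (a / b)) * tanh (log (a / b) / 2)) := by rw [← sum_mul, hsum]
    _ = (a - b) * φ (log (a / b)) :=
        mul_odd_mul_tanh_half_log_div (bdryWt_nonneg k 1) (bdryWt_nonneg k (-1)) hφ
    _ = ∑ σ : Conf c M with σ.bdry = k, spin c M σ [] * (wt c J β M σ * φ (log (a / b))) := by
        rw [← hdiff, sum_mul]
        exact sum_congr rfl fun σ _ => mul_assoc _ _ _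
    _ = _ := sum_congr rfl fun σ hσ => by rw [hX σ hσ]

theorem sum_wt_eq_two_mul_sum_spin_up :
    ∑ σ : Conf c M, wt c J β M σ =
      2 * ∑ σ : Conf c M, if spin c M σ [] = 1 then wt c J β M σ else 0 := by
  rw [sum_eq_sum_ite_add_sum_ite_of_sign (fun σ _ => spin_nil_eq_one_or σ),
    sum_spin_down_eq_sum_spin_up_flip]
  simp only [wt_flip]
  ring

theorem sum_wt_mul_odd_abs_mul_tanh_eq_two_mul_sum_spin_up {φ : ℝ → ℝ} (hφ : φ.Odd) :
    ∑ σ : Conf c M, wt c J β M σ * (φ |Xof c J β M σ| * tanh (|Xof c J β M σ| / 2)) =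
      2 * ∑ σ : Conf c M,
        if spin c M σ [] = 1 then wt c J β M σ * φ (Xof c J β M σ) else 0 := by
  have heven : ∀ x, φ |x| * tanh (|x| / 2) = φ x * tanh (x / 2) := fun x => by
    rcases abs_choice x with h | h
    · rw [h]
    · rw [h, hφ, neg_div, tanh_neg, neg_mul_neg]
  calc ∑ σ : Conf c M, wt c J β M σ * (φ |Xof c J β M σ| * tanh (|Xof c J β M σ| / 2))
      = ∑ σ : Conf c M, wt c J β M σ * (φ (Xof c J β M σ) * tanh (Xof c J β M σ / 2)) := by
        simp only [heven]
    _ = ∑ σ : Conf c M, spin c M σ [] * (wt c J β M σ * φ (Xof c J β M σ)) := by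
        rw [← sum_fiberwise univ Conf.bdry, ← sum_fiberwise univ Conf.bdry]
        exact sum_congr rfl fun k _ => sum_fiber_wt_mul_odd_mul_tanh hφ k
    _ = 2 * ∑ σ : Conf c M,
          if spin c M σ [] = 1 then wt c J β M σ * φ (Xof c J β M σ) else 0 := by
        rw [sum_mul_eq_sum_ite_sub_sum_ite_of_sign (fun σ _ => spin_nil_eq_one_or σ),
          sum_spin_down_eq_sum_spin_up_flip]
        simp only [wt_flip, Xof_flip, hφ.eq, mul_neg, ← sum_filter, sum_neg_distrib]
        ring

end Ising

theorem stmt14_general (c : Vtx → ℕ) (J : Vtx → ℝ) (β : ℝ) (N : ℕ) (v : Vtx)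
    (φ : ℝ → ℝ) (hodd : ∀ x : ℝ, φ (-x) = -φ x) :
    (∑ σ : Conf (subC c v) (N - v.length),
        if spin (subC c v) (N - v.length) σ [] = 1 then
          wt (subC c v) (subJ J v) β (N - v.length) σ *
            φ (Xof (subC c v) (subJ J v) β (N - v.length) σ)
        else 0) /
      (∑ σ : Conf (subC c v) (N - v.length),
        if spin (subC c v) (N - v.length) σ [] = 1 then
          wt (subC c v) (subJ J v) β (N - v.length) σ else 0) =
    (∑ σ : Conf (subC c v) (N - v.length),
        wt (subC c v) (subJ J v) β (N - v.length) σ *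
          (φ |Xof (subC c v) (subJ J v) β (N - v.length) σ| *
            Real.tanh (|Xof (subC c v) (subJ J v) β (N - v.length) σ| / 2))) /
      (∑ σ : Conf (subC c v) (N - v.length),
        wt (subC c v) (subJ J v) β (N - v.length) σ) := by
  rw [sum_wt_mul_odd_abs_mul_tanh_eq_two_mul_sum_spin_up hodd, sum_wt_eq_two_mul_sum_spin_up,
    mul_div_mul_left _ _ two_ne_zero]

theorem stmt14 (c : Vtx → ℕ) (J : Vtx → ℝ) (β : ℝ) (hβ : 0 < β)
    (hJ : ∀ w, IsVtx c w → w ≠ [] → 0 < J w)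
    (N : ℕ) (v : Vtx) (hv : IsVtx c v) (hvN : v.length < N)
    (φ : ℝ → ℝ) (hodd : ∀ x : ℝ, φ (-x) = -φ x) :
    (∑ σ : Conf (subC c v) (N - v.length),
        if spin (subC c v) (N - v.length) σ [] = 1 then
          wt (subC c v) (subJ J v) β (N - v.length) σ *
            φ (Xof (subC c v) (subJ J v) β (N - v.length) σ)
        else 0) /
      (∑ σ : Conf (subC c v) (N - v.length),
        if spin (subC c v) (N - v.length) σ [] = 1 then
          wt (subC c v) (subJ J v) β (N - v.length) σ else 0) =
    (∑ σ : Conf (subC c v) (N - v.length),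
        wt (subC c v) (subJ J v) β (N - v.length) σ *
          (φ |Xof (subC c v) (subJ J v) β (N - v.length) σ| *
            Real.tanh (|Xof (subC c v) (subJ J v) β (N - v.length) σ| / 2))) /
      (∑ σ : Conf (subC c v) (N - v.length),
        wt (subC c v) (subJ J v) β (N - v.length) σ) :=
  stmt14_general c J β N v φ hodd
end
end

section
/- Let f : [0,∞) → ℝ be differentiable, weakly increasing and concave with f(0) = 0. Then the function x ↦ (f(√x))² is concave on [0,∞). -/
/-!
Writing `s = √x`, the derivative of `x ↦ f (√x) ^ 2` at `x > 0` is `(f s / s) * f' s`.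
Concavity with `f 0 = 0` makes the secant slope `f s / s` antitone, concavity makes `f'` antitone,
and monotonicity makes both factors nonnegative, so the derivative is antitone.
-/

open Set

lemma AntitoneOn.mul_of_nonneg {α M₀ : Type*} [Preorder α] [Mul M₀] [Zero M₀] [Preorder M₀]
    [PosMulMono M₀] [MulPosMono M₀] {f g : α → M₀} {s : Set α}
    (hf : AntitoneOn f s) (hg : AntitoneOn g s)
    (hf₀ : ∀ x ∈ s, 0 ≤ f x) (hg₀ : ∀ x ∈ s, 0 ≤ g x) : AntitoneOn (f * g) s :=
  fun _ ha _ hb h ↦ mul_le_mul (hf ha hb h) (hg ha hb h) (hg₀ _ hb) (hf₀ _ ha)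

lemma MonotoneOn.deriv_nonneg_of_mem_interior {f : ℝ → ℝ} {s : Set ℝ} {x : ℝ}
    (hf : MonotoneOn f s) (hx : x ∈ interior s) : 0 ≤ deriv f x := by
  rw [← derivWithin_of_isOpen isOpen_interior hx]
  exact (hf.mono interior_subset).derivWithin_nonneg

lemma ConcaveOn.antitoneOn_div_self {𝕜 : Type*} [Field 𝕜] [LinearOrder 𝕜] [IsStrictOrderedRing 𝕜]
    {f : 𝕜 → 𝕜} (hf : ConcaveOn 𝕜 (Ici 0) f) (hf0 : f 0 = 0) :
    AntitoneOn (fun x ↦ f x / x) (Ioi 0) := by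
  have hslope : AntitoneOn (slope f 0) (Ioi 0) :=
    (hf.antitoneOn_slope_gt self_mem_Ici).mono fun x hx ↦ ⟨hx.le, hx⟩
  have hslope_eq : slope f 0 = fun x ↦ f x / x := funext fun x ↦ by simp [slope_def_field, hf0]
  rwa [hslope_eq] at hslope

lemma hasDerivAt_sq_comp_sqrt {f : ℝ → ℝ} {x : ℝ} (hx : 0 < x) (hf : DifferentiableAt ℝ f √x) :
    HasDerivAt (fun x ↦ f √x ^ 2) (f √x / √x * deriv f √x) x := by
  refine ((hf.hasDerivAt.comp x (Real.hasDerivAt_sqrt hx.ne')).pow 2).congr_deriv ?_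
  have : 0 < √x := Real.sqrt_pos.2 hx
  simp only [Function.comp_apply]
  field_simp
  ring

theorem stmt17 (f : ℝ → ℝ)
    (hdiff : DifferentiableOn ℝ f (Set.Ici 0))
    (hmono : MonotoneOn f (Set.Ici 0))
    (hconc : ConcaveOn ℝ (Set.Ici 0) f)
    (hf0 : f 0 = 0) :
    ConcaveOn ℝ (Set.Ici 0) (fun x => (f (Real.sqrt x)) ^ 2) := by
  have hd : ∀ s ∈ Ioi (0 : ℝ), DifferentiableAt ℝ f s := fun s hs ↦
    hdiff.differentiableAt (Ici_mem_nhds hs)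
  have hderiv : ∀ x ∈ Ioi (0 : ℝ), HasDerivAt (fun x ↦ f √x ^ 2) (f √x / √x * deriv f √x) x :=
    fun x hx ↦ hasDerivAt_sq_comp_sqrt hx (hd _ (Real.sqrt_pos.2 hx))
  have hf_nonneg : ∀ s ∈ Ici (0 : ℝ), 0 ≤ f s := fun s hs ↦ hf0 ▸ hmono self_mem_Ici hs hs
  have hanti : AntitoneOn (fun s ↦ f s / s * deriv f s) (Ioi 0) :=
    (hconc.antitoneOn_div_self hf0).mul_of_nonneg
      ((hconc.subset Ioi_subset_Ici_self (convex_Ioi 0)).antitoneOn_deriv hd)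
      (fun s hs ↦ div_nonneg (hf_nonneg s (Ioi_subset_Ici_self hs)) (le_of_lt hs))
      (fun s hs ↦ hmono.deriv_nonneg_of_mem_interior (by rwa [interior_Ici]))
  have hcont : ContinuousOn (fun x ↦ f √x ^ 2) (Ici 0) :=
    (hdiff.continuousOn.comp Real.continuous_sqrt.continuousOn
      fun x _ ↦ Real.sqrt_nonneg x).pow 2
  refine AntitoneOn.concaveOn_of_deriv (convex_Ici 0) hcont ?_ ?_ <;> rw [interior_Ici]
  · exact fun x hx ↦ (hderiv x hx).differentiableAt.differentiableWithinAt
  · intro x hx y hy hxy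
    rw [(hderiv x hx).deriv, (hderiv y hy).deriv]
    exact hanti (Real.sqrt_pos.2 hx) (Real.sqrt_pos.2 hy) (Real.sqrt_le_sqrt hxy)
end

section
/- Let g : [0,∞) → [0,∞) be concave with g(0) = 0, and let Y be a nonnegative random variable with E[Y²] < ∞ and positive variance. Then E[g(Y)²] · (E[Y])² ≤ (E[g(Y)])² · E[Y²]. -/
/-!
Put `I = E[Y]`, `J = E[g(Y)]`, `h(y) = I g(y) - J y` and `φ(y) = I g(y) + J y`, so that
`E[h(Y)] = 0` and `h φ = I² g² - J² y²`; the claim is `E[h(Y) φ(Y)] ≤ 0`.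
Concavity and `g ≥ 0` make `g(y)/y` nonincreasing and `g` nondecreasing. Hence `h` is
nonnegative up to some threshold `a` and nonpositive beyond it, while `φ` is nondecreasing,
so `h(y) (φ(y) - φ(a)) ≤ 0` pointwise; integrating and using `E[h(Y)] = 0` gives the claim.
-/

open MeasureTheory Set

namespace ConcaveOn

variable {g : ℝ → ℝ}

theorem mul_apply_le_mul_apply (hg : ConcaveOn ℝ (Ici 0) g) (hg0 : 0 ≤ g 0) {x y : ℝ}
    (hx : 0 < x) (hxy : x ≤ y) : x * g y ≤ y * g x := by
  have hy : 0 < y := hx.trans_le hxy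
  have hcomb := hg.2 (mem_Ici.mpr hy.le) (mem_Ici.mpr le_rfl) (div_nonneg hx.le hy.le)
    (sub_nonneg.mpr (div_le_one_of_le₀ hxy hy.le)) (add_sub_cancel _ _)
  simp only [smul_eq_mul, div_mul_cancel₀ _ hy.ne', div_mul_eq_mul_div, mul_zero,
    add_zero] at hcomb
  have hxgy : x * g y / y ≤ g x := by
    linarith [mul_nonneg (sub_nonneg.mpr (div_le_one_of_le₀ hxy hy.le)) hg0]
  rwa [div_le_iff₀ hy, mul_comm (g x)] at hxgy

/-- A negative secant slope persists to the right and would drive `g` below any bound. -/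
theorem monotoneOn_of_bddBelow {a : ℝ} (hg : ConcaveOn ℝ (Ici a) g)
    (hbdd : BddBelow (g '' Ici a)) : MonotoneOn g (Ici a) := by
  obtain ⟨m, hm⟩ := hbdd
  intro x hx y hy hxy
  by_contra! hlt
  have hxy' : x < y := hxy.lt_of_ne (by rintro rfl; exact lt_irrefl _ hlt)
  set s := (g y - g x) / (y - x)
  have hs : s < 0 := div_neg_of_neg_of_pos (sub_neg.mpr hlt) (sub_pos.mpr hxy')
  set z := y + (g y - m + 1) / -s
  have hgy : m ≤ g y := hm ⟨y, hy, rfl⟩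
  have hyz : y < z := lt_add_of_pos_right _ (div_pos (by linarith) (neg_pos.mpr hs))
  have hslope := hg.slope_anti_adjacent hx (mem_Ici.mpr ((mem_Ici.mp hy).trans hyz.le)) hxy' hyz
  have hgz : g z ≤ m - 1 := by
    have hstep : s * (z - y) = -(g y - m + 1) := by
      rw [add_sub_cancel_left, div_neg, mul_neg, mul_div_cancel₀ _ hs.ne]
    rw [div_le_iff₀ (sub_pos.mpr hyz)] at hslope
    linarith
  linarith [hm ⟨z, mem_Ici.mpr ((mem_Ici.mp hy).trans hyz.le), rfl⟩]

theorem monotoneOn_Ici_zero (hg : ConcaveOn ℝ (Ici 0) g) (hnn : ∀ x, 0 ≤ x → 0 ≤ g x) :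
    MonotoneOn g (Ici 0) :=
  hg.monotoneOn_of_bddBelow ⟨0, by rintro _ ⟨x, hx, rfl⟩; exact hnn x hx⟩

theorem apply_le_mul_one_add (hg : ConcaveOn ℝ (Ici 0) g) (hnn : ∀ x, 0 ≤ x → 0 ≤ g x) {y : ℝ}
    (hy : 0 ≤ y) : g y ≤ g 1 * (1 + y) := by
  have hg1 := hnn 1 zero_le_one
  rcases le_total y 1 with hy1 | hy1
  · nlinarith [hg.monotoneOn_Ici_zero hnn hy (mem_Ici.mpr zero_le_one) hy1]
  · nlinarith [hg.mul_apply_le_mul_apply (hnn 0 le_rfl) one_pos hy1]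

/-- `(a g(y) - b y) / y` is nonincreasing along with `g(y) / y`. -/
theorem lt_of_mul_sub_mul_pos_of_neg (hg : ConcaveOn ℝ (Ici 0) g) (hg0 : 0 ≤ g 0)
    {a b y z : ℝ} (ha : 0 ≤ a) (hz : 0 ≤ z)
    (hpos : 0 < a * g y - b * y) (hneg : a * g z - b * z < 0) : y < z := by
  by_contra! hzy
  have hz_pos : 0 < z := hz.lt_of_ne <| by
    rintro rfl
    nlinarith [mul_nonneg ha hg0]
  have hy : 0 < y := hz_pos.trans_le hzy
  have hstar := hg.mul_apply_le_mul_apply hg0 hz_pos hzy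
  have hcomb : z * (a * g y - b * y) ≤ y * (a * g z - b * z) := by
    nlinarith [mul_le_mul_of_nonneg_left hstar ha]
  nlinarith [mul_pos hz_pos hpos, mul_neg_of_pos_of_neg hy hneg]

end ConcaveOn

theorem exists_threshold_of_sign_change_once {h : ℝ → ℝ}
    (hcross : ∀ y z, 0 ≤ z → 0 < h y → h z < 0 → y < z) (hneg : ∃ z, 0 ≤ z ∧ h z < 0) :
    ∃ a, 0 ≤ a ∧ (∀ y, 0 ≤ y → 0 < h y → y ≤ a) ∧ ∀ y, 0 ≤ y → h y < 0 → a ≤ y := by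
  obtain ⟨z, hz, hhz⟩ := hneg
  have hbdd : BddAbove {y | 0 ≤ y ∧ 0 < h y} := ⟨z, fun y hy => (hcross y z hz hy.2 hhz).le⟩
  refine ⟨sSup {y | 0 ≤ y ∧ 0 < h y}, Real.sSup_nonneg fun y hy => hy.1,
    fun y hy hhy => le_csSup hbdd ⟨hy, hhy⟩, fun y hy hhy => ?_⟩
  exact Real.sSup_le (fun s hs => (hcross s y hy hs.2 hhy).le) hy

section Integral

variable {Ω : Type*} [MeasurableSpace Ω] {μ : Measure Ω}

theorem integral_mul_nonpos_of_sign_change_once {Y : Ω → ℝ} (hY : ∀ ω, 0 ≤ Y ω)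
    {h φ : ℝ → ℝ} (hcross : ∀ y z, 0 ≤ z → 0 < h y → h z < 0 → y < z)
    (hφ : MonotoneOn φ (Ici 0)) (hh : Integrable (fun ω => h (Y ω)) μ)
    (hhφ : Integrable (fun ω => h (Y ω) * φ (Y ω)) μ) (hmean : ∫ ω, h (Y ω) ∂μ = 0) :
    ∫ ω, h (Y ω) * φ (Y ω) ∂μ ≤ 0 := by
  by_cases hneg : ∃ z, 0 ≤ z ∧ h z < 0
  · obtain ⟨a, ha, hle, hge⟩ := exists_threshold_of_sign_change_once hcross hneg
    have hpt : ∀ y, 0 ≤ y → h y * φ y ≤ φ a * h y := by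
      intro y hy
      rw [mul_comm (φ a)]
      rcases lt_trichotomy (h y) 0 with hhy | hhy | hhy
      · exact mul_le_mul_of_nonpos_left (hφ ha hy (hge y hy hhy)) hhy.le
      · simp [hhy]
      · exact mul_le_mul_of_nonneg_left (hφ hy ha (hle y hy hhy)) hhy.le
    calc ∫ ω, h (Y ω) * φ (Y ω) ∂μ ≤ ∫ ω, φ a * h (Y ω) ∂μ :=
          integral_mono hhφ (hh.const_mul _) fun ω => hpt _ (hY ω)
      _ = 0 := by rw [integral_const_mul, hmean, mul_zero]
  · push Not at hneg
    have hzero : (fun ω => h (Y ω)) =ᵐ[μ] 0 :=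
      (integral_eq_zero_iff_of_nonneg (fun ω => hneg _ (hY ω)) hh).mp hmean
    refine (integral_eq_zero_of_ae ?_).le
    filter_upwards [hzero] with ω hω
    simp [hω]

theorem ConcaveOn.memLp_two_comp [IsFiniteMeasure μ] {g : ℝ → ℝ} (hg : ConcaveOn ℝ (Ici 0) g)
    (hnn : ∀ x, 0 ≤ x → 0 ≤ g x) {Y : Ω → ℝ} (hY : ∀ ω, 0 ≤ Y ω) (hY2 : MemLp Y 2 μ) :
    MemLp (fun ω => g (Y ω)) 2 μ := by
  have hmeas : AEStronglyMeasurable (fun ω => g (Y ω)) μ := by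
    have hmono : Monotone (fun y => g (max y 0)) := fun u v huv =>
      hg.monotoneOn_Ici_zero hnn (le_max_right u 0) (le_max_right v 0) (max_le_max huv le_rfl)
    have hcomp : (fun ω => g (Y ω)) = (fun y => g (max y 0)) ∘ Y :=
      funext fun ω => by simp only [Function.comp_apply, max_eq_left (hY ω)]
    rw [hcomp]
    exact (hmono.measurable.comp_aemeasurable
      hY2.aestronglyMeasurable.aemeasurable).aestronglyMeasurable
  have hbound : MemLp (fun ω => g 1 * (1 + Y ω)) 2 μ :=
    ((memLp_const (1 : ℝ)).add hY2).const_mul (g 1)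
  refine hbound.of_le hmeas (Filter.Eventually.of_forall fun ω => ?_)
  have hgY := hg.apply_le_mul_one_add hnn (hY ω)
  rw [Real.norm_of_nonneg (hnn _ (hY ω)), Real.norm_of_nonneg ((hnn _ (hY ω)).trans hgY)]
  exact hgY

end Integral

theorem stmt18_general {Ω : Type*} [MeasurableSpace Ω] (μ : Measure Ω) [IsProbabilityMeasure μ]
    (g : ℝ → ℝ) (hconc : ConcaveOn ℝ (Set.Ici 0) g)
    (hgnn : ∀ x : ℝ, 0 ≤ x → 0 ≤ g x)
    (Y : Ω → ℝ) (hY : ∀ ω, 0 ≤ Y ω)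
    (hInt : Integrable Y μ) (hInt2 : Integrable (fun ω => (Y ω) ^ 2) μ) :
    (∫ ω, (g (Y ω)) ^ 2 ∂μ) * (∫ ω, Y ω ∂μ) ^ 2 ≤
      (∫ ω, g (Y ω) ∂μ) ^ 2 * ∫ ω, (Y ω) ^ 2 ∂μ := by
  set I := ∫ ω, Y ω ∂μ
  set J := ∫ ω, g (Y ω) ∂μ
  have hI : 0 ≤ I := integral_nonneg hY
  have hJ : 0 ≤ J := integral_nonneg fun ω => hgnn _ (hY ω)
  have hgY : MemLp (fun ω => g (Y ω)) 2 μ := hconc.memLp_two_comp hgnn hY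
    ((memLp_two_iff_integrable_sq hInt.aestronglyMeasurable).mpr hInt2)
  have hgInt : Integrable (fun ω => g (Y ω)) μ := hgY.integrable one_le_two
  have hmean : ∫ ω, I * g (Y ω) - J * Y ω ∂μ = 0 := by
    rw [integral_sub (hgInt.const_mul I) (hInt.const_mul J), integral_const_mul,
      integral_const_mul, mul_comm, sub_self]
  have hprod : ∀ ω, (I * g (Y ω) - J * Y ω) * (I * g (Y ω) + J * Y ω)
      = I ^ 2 * g (Y ω) ^ 2 - J ^ 2 * Y ω ^ 2 := fun ω => by ring
  have key := integral_mul_nonpos_of_sign_change_once (μ := μ) hY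
    (h := fun y => I * g y - J * y) (φ := fun y => I * g y + J * y)
    (fun y z hz hpos hneg => hconc.lt_of_mul_sub_mul_pos_of_neg (hgnn 0 le_rfl) hI hz hpos hneg)
    (fun x hx y hy hxy => add_le_add
      (mul_le_mul_of_nonneg_left (hconc.monotoneOn_Ici_zero hgnn hx hy hxy) hI)
      (mul_le_mul_of_nonneg_left hxy hJ))
    ((hgInt.const_mul I).sub (hInt.const_mul J))
    (by simp only [hprod]; exact (hgY.integrable_sq.const_mul _).sub (hInt2.const_mul _))
    hmean
  simp only [hprod] at key
  rw [integral_sub (hgY.integrable_sq.const_mul _) (hInt2.const_mul _), integral_const_mul,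
    integral_const_mul] at key
  linarith

theorem stmt18 {Ω : Type*} [MeasurableSpace Ω] (μ : Measure Ω) [IsProbabilityMeasure μ]
    (g : ℝ → ℝ) (hconc : ConcaveOn ℝ (Set.Ici 0) g) (hg0 : g 0 = 0)
    (hgnn : ∀ x : ℝ, 0 ≤ x → 0 ≤ g x)
    (Y : Ω → ℝ) (hY : ∀ ω, 0 ≤ Y ω)
    (hInt : Integrable Y μ) (hInt2 : Integrable (fun ω => (Y ω) ^ 2) μ)
    (hvar : (∫ ω, Y ω ∂μ) ^ 2 < ∫ ω, (Y ω) ^ 2 ∂μ) :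
    (∫ ω, (g (Y ω)) ^ 2 ∂μ) * (∫ ω, Y ω ∂μ) ^ 2 ≤
      (∫ ω, g (Y ω) ∂μ) ^ 2 * ∫ ω, (Y ω) ^ 2 ∂μ :=
  stmt18_general μ g hconc hgnn Y hY hInt hInt2
end

section
/- Let f : [0,∞) → [0,∞) be differentiable, weakly increasing and concave with f(0) = 0, and let X be a nonnegative random variable with E[X⁴] < ∞ and E[X²] > 0. Then E[f(X)⁴] · (E[X²])² ≤ (E[f(X)²])² · E[X⁴]. -/
/-!
Put `a = E[X²]`, `b = E[f(X)²]`, `d = a f(X)² - b X²` and `m = a f(X)² + b X²`, so that `E[d] = 0`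
and `d m = a² f(X)⁴ - b² X⁴`. For concave `f` with `f 0 ≥ 0` the ratio `f x / x` is nonincreasing,
so `d ≥ 0` only at values of `X` below those where `d < 0`; as `m` is increasing in `X`, some
threshold `M` separates the values of `m` on the two sets. Then `d m ≤ d M` pointwise and
`E[d m] ≤ M E[d] = 0`.
-/

open MeasureTheory Set

section ConcaveFromOrigin

variable {f : ℝ → ℝ}

theorem ConcaveOn.apply_mul_le_apply_mul_of_le (hf : ConcaveOn ℝ (Ici 0) f) (hf0 : 0 ≤ f 0)
    {s t : ℝ} (hs : 0 ≤ s) (hst : s ≤ t) : f t * s ≤ f s * t := by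
  rcases (hs.trans hst).eq_or_lt with rfl | ht
  · simp [le_antisymm hst hs]
  have hconc := hf.2 (mem_Ici.2 ht.le) (mem_Ici.2 le_rfl) (div_nonneg hs ht.le)
    (sub_nonneg.2 ((div_le_one ht).2 hst)) (add_sub_cancel _ _)
  simp only [smul_eq_mul, mul_zero, add_zero, div_mul_cancel₀ s ht.ne'] at hconc
  calc f t * s = s / t * f t * t := by field_simp
    _ ≤ f s * t := by gcongr; nlinarith [mul_nonneg (sub_nonneg.2 ((div_le_one ht).2 hst)) hf0]

theorem ConcaveOn.apply_le_mul_max_one (hf : ConcaveOn ℝ (Ici 0) f)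
    (hmono : MonotoneOn f (Ici 0)) (hf0 : 0 ≤ f 0) {x : ℝ} (hx : 0 ≤ x) :
    f x ≤ f 1 * max 1 x := by
  rcases le_total x 1 with h | h
  · rw [max_eq_left h, mul_one]
    exact hmono hx (mem_Ici.2 zero_le_one) h
  · rw [max_eq_right h]
    simpa using hf.apply_mul_le_apply_mul_of_le hf0 zero_le_one h

theorem ConcaveOn.le_of_sq_crossing (hf : ConcaveOn ℝ (Ici 0) f)
    (hfnn : ∀ x, 0 ≤ x → 0 ≤ f x) {a b s t : ℝ} (ha : 0 ≤ a) (ht : 0 ≤ t)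
    (hs_le : b * s ^ 2 ≤ a * f s ^ 2) (ht_lt : a * f t ^ 2 < b * t ^ 2) : s ≤ t := by
  by_contra! hts
  have hratio : (f s * t) ^ 2 ≤ (f t * s) ^ 2 :=
    pow_le_pow_left₀ (mul_nonneg (hfnn s (ht.trans hts.le)) ht)
      (hf.apply_mul_le_apply_mul_of_le (hfnn 0 le_rfl) ht hts.le) 2
  have hs : 0 < s := ht.trans_lt hts
  nlinarith [mul_le_mul_of_nonneg_left hratio ha, mul_le_mul_of_nonneg_right hs_le (sq_nonneg t),
    mul_lt_mul_of_pos_right ht_lt (pow_pos hs 2)]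

theorem ConcaveOn.add_sq_le_of_sq_crossing (hf : ConcaveOn ℝ (Ici 0) f)
    (hmono : MonotoneOn f (Ici 0)) (hfnn : ∀ x, 0 ≤ x → 0 ≤ f x) {a b s t : ℝ} (ha : 0 ≤ a)
    (hb : 0 ≤ b) (hs : 0 ≤ s) (ht : 0 ≤ t) (hs_le : b * s ^ 2 ≤ a * f s ^ 2)
    (ht_lt : a * f t ^ 2 < b * t ^ 2) : a * f s ^ 2 + b * s ^ 2 ≤ a * f t ^ 2 + b * t ^ 2 := by
  have hst := hf.le_of_sq_crossing hfnn ha ht hs_le ht_lt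
  have hfst := hmono hs ht hst
  have hfs := hfnn s hs
  gcongr

theorem ConcaveOn.integrable_comp_pow (hf : ConcaveOn ℝ (Ici 0) f)
    (hmono : MonotoneOn f (Ici 0)) (hfnn : ∀ x, 0 ≤ x → 0 ≤ f x) {Ω : Type*}
    [MeasurableSpace Ω] {μ : Measure Ω} [IsFiniteMeasure μ] {X : Ω → ℝ} (hX : ∀ ω, 0 ≤ X ω)
    (hfX : AEMeasurable (fun ω => f (X ω)) μ) {n : ℕ} (hXn : Integrable (fun ω => X ω ^ n) μ) :
    Integrable (fun ω => f (X ω) ^ n) μ := by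
  refine (((integrable_const 1).add hXn).const_mul (f 1 ^ n)).mono'
    (hfX.pow_const n).aestronglyMeasurable (ae_of_all _ fun ω => ?_)
  have hfX0 := hfnn _ (hX ω)
  have hf1 := hfnn 1 zero_le_one
  rw [Real.norm_eq_abs, abs_of_nonneg (pow_nonneg hfX0 n)]
  calc f (X ω) ^ n ≤ (f 1 * max 1 (X ω)) ^ n :=
        pow_le_pow_left₀ hfX0 (hf.apply_le_mul_max_one hmono (hfnn 0 le_rfl) (hX ω)) n
    _ = f 1 ^ n * max 1 (X ω) ^ n := mul_pow _ _ _
    _ ≤ f 1 ^ n * (1 + X ω ^ n) := by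
        gcongr
        rcases max_cases 1 (X ω) with ⟨h, -⟩ | ⟨h, -⟩ <;> rw [h]
        · simp [pow_nonneg (hX ω)]
        · simp

end ConcaveFromOrigin

theorem integral_mul_nonpos_of_crossing {Ω : Type*} [MeasurableSpace Ω] {μ : Measure Ω}
    {d m : Ω → ℝ} (hd : Integrable d μ) (hdm : Integrable (fun ω => d ω * m ω) μ)
    (hd0 : ∫ ω, d ω ∂μ = 0) (hcross : ∀ ω ω', 0 ≤ d ω → d ω' < 0 → m ω ≤ m ω') :
    ∫ ω, d ω * m ω ∂μ ≤ 0 := by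
  by_cases hmixed : (∃ ω, 0 ≤ d ω) ∧ ∃ ω', d ω' < 0
  · obtain ⟨⟨ω₀, hω₀⟩, ω₁, hω₁⟩ := hmixed
    have hbdd : BddBelow (m '' {ω | d ω < 0}) := by
      refine ⟨m ω₀, ?_⟩
      rintro _ ⟨ω, hω, rfl⟩
      exact hcross _ _ hω₀ hω
    have hpt : ∀ ω, d ω * m ω ≤ d ω * sInf (m '' {ω | d ω < 0}) := by
      intro ω
      rcases le_or_gt 0 (d ω) with h | h
      · refine mul_le_mul_of_nonneg_left (le_csInf ⟨_, mem_image_of_mem m hω₁⟩ ?_) h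
        rintro _ ⟨ω', hω', rfl⟩
        exact hcross _ _ h hω'
      · exact mul_le_mul_of_nonpos_left (csInf_le hbdd (mem_image_of_mem m h)) h.le
    calc ∫ ω, d ω * m ω ∂μ ≤ ∫ ω, d ω * sInf (m '' {ω | d ω < 0}) ∂μ :=
          integral_mono hdm (hd.mul_const _) hpt
      _ = 0 := by rw [integral_mul_const, hd0, zero_mul]
  · -- `d` has constant sign, so `∫ d = 0` forces `d = 0` a.e.
    have hae : d =ᵐ[μ] 0 := by
      rcases not_and_or.1 hmixed with h | h <;> push Not at h
      · have hneg : -d =ᵐ[μ] 0 :=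
          (integral_eq_zero_iff_of_nonneg (fun ω => neg_nonneg.2 (h ω).le) hd.neg).1
            (by simp [integral_neg, hd0])
        filter_upwards [hneg] with ω hω
        simpa using hω
      · exact (integral_eq_zero_iff_of_nonneg h hd).1 hd0
    have hdm0 : (fun ω => d ω * m ω) =ᵐ[μ] 0 := hae.mono fun ω h => by simp [h]
    rw [integral_congr_ae hdm0, Pi.zero_def, integral_zero]

theorem stmt19_general {Ω : Type*} [MeasurableSpace Ω] (μ : Measure Ω) [IsProbabilityMeasure μ]
    (f : ℝ → ℝ)
    (hmono : MonotoneOn f (Set.Ici 0))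
    (hconc : ConcaveOn ℝ (Set.Ici 0) f)
    (hfnn : ∀ x : ℝ, 0 ≤ x → 0 ≤ f x)
    (X : Ω → ℝ) (hX : ∀ ω, 0 ≤ X ω)
    (hInt2 : Integrable (fun ω => (X ω) ^ 2) μ)
    (hInt4 : Integrable (fun ω => (X ω) ^ 4) μ) :
    (∫ ω, (f (X ω)) ^ 4 ∂μ) * (∫ ω, (X ω) ^ 2 ∂μ) ^ 2 ≤
      (∫ ω, (f (X ω)) ^ 2 ∂μ) ^ 2 * ∫ ω, (X ω) ^ 4 ∂μ := by
  have hfX : AEMeasurable (fun ω => f (X ω)) μ := by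
    have hF : Monotone fun y => f √y := fun x y hxy =>
      hmono (Real.sqrt_nonneg x) (Real.sqrt_nonneg y) (Real.sqrt_le_sqrt hxy)
    refine (hF.measurable.comp_aemeasurable hInt2.aemeasurable).congr (ae_of_all _ fun ω => ?_)
    simp [Real.sqrt_sq (hX ω)]
  have hfX2 := hconc.integrable_comp_pow hmono hfnn hX hfX hInt2
  have hfX4 := hconc.integrable_comp_pow hmono hfnn hX hfX hInt4
  set a := ∫ ω, X ω ^ 2 ∂μ
  set b := ∫ ω, f (X ω) ^ 2 ∂μ
  have ha : 0 ≤ a := integral_nonneg fun ω => sq_nonneg _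
  have hb : 0 ≤ b := integral_nonneg fun ω => sq_nonneg _
  have hdm : (fun ω => (a * f (X ω) ^ 2 - b * X ω ^ 2) * (a * f (X ω) ^ 2 + b * X ω ^ 2)) =
      fun ω => a ^ 2 * f (X ω) ^ 4 - b ^ 2 * X ω ^ 4 := by
    ext ω; ring
  have key := integral_mul_nonpos_of_crossing (d := fun ω => a * f (X ω) ^ 2 - b * X ω ^ 2)
    (m := fun ω => a * f (X ω) ^ 2 + b * X ω ^ 2) ((hfX2.const_mul a).sub (hInt2.const_mul b))
    (hdm ▸ (hfX4.const_mul _).sub (hInt4.const_mul _))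
    (by rw [integral_sub (hfX2.const_mul a) (hInt2.const_mul b), integral_const_mul,
      integral_const_mul, mul_comm, sub_self])
    (fun ω ω' hω hω' => hconc.add_sq_le_of_sq_crossing hmono hfnn ha hb (hX ω) (hX ω')
      (sub_nonneg.1 hω) (sub_neg.1 hω'))
  rw [hdm, integral_sub (hfX4.const_mul _) (hInt4.const_mul _), integral_const_mul,
    integral_const_mul] at key
  linarith

theorem stmt19 {Ω : Type*} [MeasurableSpace Ω] (μ : Measure Ω) [IsProbabilityMeasure μ]
    (f : ℝ → ℝ)
    (hdiff : DifferentiableOn ℝ f (Set.Ici 0))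
    (hmono : MonotoneOn f (Set.Ici 0))
    (hconc : ConcaveOn ℝ (Set.Ici 0) f)
    (hfnn : ∀ x : ℝ, 0 ≤ x → 0 ≤ f x)
    (hf0 : f 0 = 0)
    (X : Ω → ℝ) (hX : ∀ ω, 0 ≤ X ω)
    (hInt2 : Integrable (fun ω => (X ω) ^ 2) μ)
    (hInt4 : Integrable (fun ω => (X ω) ^ 4) μ)
    (hpos : 0 < ∫ ω, (X ω) ^ 2 ∂μ) :
    (∫ ω, (f (X ω)) ^ 4 ∂μ) * (∫ ω, (X ω) ^ 2 ∂μ) ^ 2 ≤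
      (∫ ω, (f (X ω)) ^ 2 ∂μ) ^ 2 * ∫ ω, (X ω) ^ 4 ∂μ :=
  stmt19_general μ f hmono hconc hfnn X hX hInt2 hInt4
end
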